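/- arXiv:1311.3460 — 8 statements merged into one kernel-verified Lean document; each statement's English description precedes it below -/
import Mathlib

section
/- Let V be a finite type, E : V → V → Prop an irreflexive and asymmetric relation (as holds for the edge relation of any finite directed acyclic graph), S : V → Type a family of state sets, and for each i : V a vertex update function f i : (∀ j, E i j → S j) → S i. Let F i : (∀ v, S v) → (∀ v, S v) be the Γ-local function that replaces the i-th coordinate of a state s by f i (fun j h => s j) and leaves all other coordinates unchanged. Then: (i) F i ∘ F i = F i for every i ∈ V; (ii) if E i j, then F i ∘ F j ∘ F i = F j ∘ F i ∘ F j = F i ∘ F j; (iii) if i ≠ j, ¬ E i j and ¬ E j i, then F i ∘ F j = F j ∘ F i. -/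
/-- The `Γ`-local function attached to the vertex update functions `f`: it replaces the
`i`-th coordinate of a system state `s` by `f i (fun j _ => s j)` and leaves the other
coordinates unchanged. -/
def localFun {V : Type*} [DecidableEq V] {E : V → V → Prop} {S : V → Type*}
    (f : ∀ i, (∀ j, E i j → S j) → S i) (i : V) (s : ∀ v, S v) : ∀ v, S v :=
  Function.update s i (f i fun j _ => s j)

theorem stmt_0 {V : Type*} [Fintype V] [DecidableEq V] (E : V → V → Prop)
    (hirr : ∀ i, ¬ E i i) (hasymm : ∀ i j, E i j → ¬ E j i)
    (S : V → Type*) (f : ∀ i, (∀ j, E i j → S j) → S i) :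
    (∀ i, localFun f i ∘ localFun f i = localFun f i) ∧
    (∀ i j, E i j →
      localFun f i ∘ localFun f j ∘ localFun f i = localFun f i ∘ localFun f j ∧
      localFun f j ∘ localFun f i ∘ localFun f j = localFun f i ∘ localFun f j) ∧
    (∀ i j, i ≠ j → ¬ E i j → ¬ E j i →
      localFun f i ∘ localFun f j = localFun f j ∘ localFun f i) := by
  -- `f i` only reads its argument at out-neighbours
  have key : ∀ (i : V) (s t : ∀ v, S v), (∀ j, E i j → s j = t j) →
      (f i fun j _ => s j) = (f i fun j _ => t j) := by
    intro i s t h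
    congr 1
    funext j hj
    exact h j hj
  have off : ∀ (i : V) (s : ∀ v, S v) (v : V), v ≠ i → localFun f i s v = s v := by
    intro i s v hv
    exact Function.update_of_ne hv _ _
  have ati : ∀ (i : V) (s : ∀ v, S v), localFun f i s i = f i fun j _ => s j := by
    intro i s
    exact Function.update_self _ _ _
  have Fagree : ∀ (i : V) (t u : ∀ v, S v), (∀ v, v ≠ i → t v = u v) →
      localFun f i t = localFun f i u := by
    intro i t u h
    funext v
    rcases eq_or_ne v i with rfl | hv
    · rw [ati, ati]
      exact key v t u fun j hj => h j (fun he => hirr v (he ▸ hj))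
    · rw [off i t v hv, off i u v hv, h v hv]
  refine ⟨?_, ?_, ?_⟩
  · intro i
    funext s
    exact Fagree i (localFun f i s) s (fun v hv => off i s v hv)
  · intro i j hij
    have hji : ∀ m, E j m → m ≠ i := by
      intro m hm he
      exact hasymm i j hij (he ▸ hm)
    have hne : i ≠ j := fun he => hirr i (he ▸ hij)
    -- F j (F i s) and F j s agree off i
    have agree : ∀ s v, v ≠ i → localFun f j (localFun f i s) v = localFun f j s v := by
      intro s v hv
      rcases eq_or_ne v j with rfl | hvj
      · rw [ati, ati]
        exact key v _ _ fun m hm => off i s m (hji m hm)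
      · rw [off j _ v hvj, off j _ v hvj, off i _ v hv]
    constructor
    · funext s
      exact Fagree i _ _ (agree s)
    · funext s
      simp only [Function.comp_apply]
      funext v
      rcases eq_or_ne v j with rfl | hvj
      · rw [ati, off i _ v hne.symm, ati]
        exact key v _ _ fun m hm => by
          rw [off i _ m (hji m hm), off v _ m (fun he => hirr v (he ▸ hm))]
      · rw [off j _ v hvj]
  · intro i j hne hEij hEji
    funext s
    have h1 : localFun f j s i = s i := off j s i hne
    have h2 : localFun f i s j = s j := off i s j hne.symm
    funext v
    simp only [Function.comp_apply]
    rcases eq_or_ne v i with rfl | hvi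
    · rw [ati, off j _ v hne, ati]
      exact key v _ _ fun k hk => off j s k (fun he => hEij (he ▸ hk))
    rcases eq_or_ne v j with rfl | hvj
    · rw [off i _ v hvi, ati, ati]
      exact key v _ _ fun k hk => (off i s k (fun he => hEji (he ▸ hk))).symm
    · rw [off i _ v hvi, off j _ v hvj, off j _ v hvj, off i _ v hvi]
end

section
/- For every word w over Fin n there exists a unique word v such that v is canonical and v ~ w (v is Kiselman-equivalent to w). This unique v is called the canonical form of w. -/
variable {n : ℕ}

/-- Generating relation of the Kiselman congruence on words over `Fin n`. -/
inductive KisStep : List (Fin n) → List (Fin n) → Prop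
  | idem : ∀ (u v : List (Fin n)) (i : Fin n),
      KisStep (u ++ [i, i] ++ v) (u ++ [i] ++ v)
  | left : ∀ (u v : List (Fin n)) (i j : Fin n), i < j →
      KisStep (u ++ [i, j, i] ++ v) (u ++ [i, j] ++ v)
  | right : ∀ (u v : List (Fin n)) (i j : Fin n), i < j →
      KisStep (u ++ [j, i, j] ++ v) (u ++ [i, j] ++ v)

/-- The Kiselman congruence: smallest equivalence relation containing `KisStep`. -/
def KisEquiv (x y : List (Fin n)) : Prop := Relation.EqvGen KisStep x y

/-- An infix `[i] ++ u ++ [i]` is special if `u` contains a letter `> i` and a letter `< i`. -/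
def Special (i : Fin n) (u : List (Fin n)) : Prop :=
  (∃ j ∈ u, i < j) ∧ (∃ j ∈ u, j < i)

/-- A word is canonical if all its infixes of the form `[i] ++ u ++ [i]` are special. -/
def Canonical (w : List (Fin n)) : Prop :=
  ∀ (i : Fin n) (u : List (Fin n)), ([i] ++ u ++ [i]) <:+: w → Special i u

/-- Delete all letters strictly smaller than `k`. -/
def filterGE (k : Fin n) (w : List (Fin n)) : List (Fin n) :=
  w.filter (fun a => decide (k ≤ a))

/-- `trunc i w` is the longest suffix of `w` with head `i`, or `[]` if `i ∉ w`. -/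
def trunc (i : Fin n) : List (Fin n) → List (Fin n)
  | [] => []
  | a :: t => if a = i then a :: t else trunc i t

/-- Longest suffix of `w` whose head is `< k` (as a natural number), or `[]`. -/
def truncLtN (k : ℕ) : List (Fin n) → List (Fin n)
  | [] => []
  | a :: t => if (a : ℕ) < k then a :: t else truncLtN k t

/-- `join u v = u⁺ ++ v`, where `u⁻` is the longest suffix of `u` that is a sublist of `v`. -/
def join : List (Fin n) → List (Fin n) → List (Fin n)
  | [], v => v
  | a :: t, v => if (a :: t).Sublist v then v else a :: join t v

/-- The local update function at vertex `i` of the update system `S_n^⋆`. -/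
def Fstep (i : Fin n) (s : Fin n → List (Fin n)) : Fin n → List (Fin n) :=
  Function.update s i
    (i :: List.foldr join []
      ((((List.finRange n).filter (fun j => decide (i < j))).reverse).map s))

/-- The evolution induced by a word (rightmost letter acts first). -/
def Fword (w : List (Fin n)) (s : Fin n → List (Fin n)) : Fin n → List (Fin n) :=
  w.foldr Fstep s

/-- The initial system state `⋆`. -/
def starState : Fin n → List (Fin n) := fun _ => []

/-!
Existence: a non-canonical word contains an infix `i u i` with `i ∉ u` and all letters of `u` on
one side of `i`; the Kiselman relations shorten it to `i u` or `u i`, and induction on the length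
ends at a canonical word.

Uniqueness: read a word from right to left as a sequence of writes into registers `0, …, n-1`,
where writing `i` stores in register `i` a snapshot of the registers `j > i`. The final state is
invariant under the defining relations. In a canonical word the snapshots written into a register
strictly grow in size, because the infix between two writes of `i` contains a larger letter whose
register has grown meanwhile. Hence the first letter of a canonical word is the least register
that holds a snapshot of the current state, and the state before that write can be recovered, so
the state determines the canonical word.
-/

lemma KisEquiv.symm {x y : List (Fin n)} (h : KisEquiv x y) : KisEquiv y x :=
  Relation.EqvGen.symm _ _ h

lemma KisEquiv.trans {x y z : List (Fin n)} (h₁ : KisEquiv x y) (h₂ : KisEquiv y z) :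
    KisEquiv x z :=
  Relation.EqvGen.trans _ _ _ h₁ h₂

instance : Trans (@KisEquiv n) KisEquiv KisEquiv := ⟨KisEquiv.trans⟩

lemma KisStep.kisEquiv {x y : List (Fin n)} (h : KisStep x y) : KisEquiv x y :=
  Relation.EqvGen.rel _ _ h

lemma KisStep.append_append {x y : List (Fin n)} (h : KisStep x y) (p q : List (Fin n)) :
    KisStep (p ++ x ++ q) (p ++ y ++ q) := by
  cases h with
  | idem u v i => simpa using KisStep.idem (p ++ u) (v ++ q) i
  | left u v i j hij => simpa using KisStep.left (p ++ u) (v ++ q) i j hij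
  | right u v i j hij => simpa using KisStep.right (p ++ u) (v ++ q) i j hij

lemma KisEquiv.append_append {x y : List (Fin n)} (h : KisEquiv x y) (p q : List (Fin n)) :
    KisEquiv (p ++ x ++ q) (p ++ y ++ q) := by
  induction h with
  | rel a b hab => exact (hab.append_append p q).kisEquiv
  | refl a => exact Relation.EqvGen.refl _
  | symm a b _ ih => exact ih.symm
  | trans a b c _ _ ih₁ ih₂ => exact ih₁.trans ih₂

lemma kisEquiv_cons_append_of_lt {i : Fin n} {u : List (Fin n)} (hu : ∀ x ∈ u, i < x) :
    KisEquiv (i :: u ++ [i]) (i :: u) := by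
  induction u with
  | nil => simpa using (KisStep.idem [] [] i).kisEquiv
  | cons j u ih =>
    have hij : i < j := hu j (by simp)
    have hiji : KisEquiv ([i, j, i] ++ u) ([i, j] ++ u) := by
      simpa using (KisStep.left [] u i j hij).kisEquiv
    calc KisEquiv (i :: j :: u ++ [i]) ([i, j] ++ (i :: u ++ [i]) ++ []) := by
          simpa using (KisStep.left [] (u ++ [i]) i j hij).kisEquiv.symm
      KisEquiv _ ([i, j] ++ (i :: u) ++ []) :=
          KisEquiv.append_append (ih fun x hx => hu x (by simp [hx])) _ _
      KisEquiv _ (i :: j :: u) := by simpa using hiji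

lemma kisEquiv_cons_append_of_gt {i : Fin n} {u : List (Fin n)} (hu : ∀ x ∈ u, x < i) :
    KisEquiv (i :: u ++ [i]) (u ++ [i]) := by
  induction u using List.reverseRecOn with
  | nil => simpa using (KisStep.idem [] [] i).kisEquiv
  | append_singleton u b ih =>
    have hbi : b < i := hu b (by simp)
    calc KisEquiv (i :: (u ++ [b]) ++ [i]) ([] ++ (i :: u ++ [i]) ++ [b, i]) := by
          simpa using (KisStep.right (i :: u) [] b i hbi).kisEquiv.symm
      KisEquiv _ ([] ++ (u ++ [i]) ++ [b, i]) :=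
          KisEquiv.append_append (ih fun x hx => hu x (by simp [hx])) _ _
      KisEquiv _ (u ++ [b] ++ [i]) := by
          simpa using (KisStep.right u [] b i hbi).kisEquiv

lemma exists_reducible_infix {w : List (Fin n)} (hw : ¬ Canonical w) :
    ∃ p i u q, w = p ++ i :: u ++ i :: q ∧ ((∀ x ∈ u, i < x) ∨ (∀ x ∈ u, x < i)) := by
  simp only [Canonical, not_forall] at hw
  obtain ⟨i, u, ⟨p, q, rfl⟩, hsp⟩ := hw
  -- shorten `i u i` to end at the first `i` after its head
  obtain ⟨s, t, hst, his⟩ :=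
    List.eq_append_cons_of_mem (List.mem_append_right u (List.mem_singleton_self i))
  have hsu : ∀ x ∈ s, x ∈ u := fun x hx => by
    have : x ∈ u ++ [i] := hst ▸ List.mem_append_left _ hx
    simpa [ne_of_mem_of_not_mem hx his] using this
  refine ⟨p, i, s, t ++ q, by rw [List.append_assoc [i], hst]; simp, ?_⟩
  by_contra! h
  obtain ⟨⟨x, hxs, hxi⟩, ⟨y, hys, hiy⟩⟩ := h
  refine hsp ⟨⟨y, hsu y hys, lt_of_le_of_ne hiy ?_⟩, ⟨x, hsu x hxs, lt_of_le_of_ne hxi ?_⟩⟩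
  · rintro rfl; exact his hys
  · rintro rfl; exact his hxs

theorem exists_canonical_kisEquiv (w : List (Fin n)) : ∃ c, Canonical c ∧ KisEquiv c w := by
  by_cases hw : Canonical w
  · exact ⟨w, hw, Relation.EqvGen.refl w⟩
  obtain ⟨p, i, u, q, rfl, hu | hu⟩ := exists_reducible_infix hw
  · obtain ⟨c, hc, hcw⟩ := exists_canonical_kisEquiv (p ++ i :: u ++ q)
    refine ⟨c, hc, hcw.trans ?_⟩
    simpa using (KisEquiv.append_append (kisEquiv_cons_append_of_lt hu) p q).symm
  · obtain ⟨c, hc, hcw⟩ := exists_canonical_kisEquiv (p ++ u ++ i :: q)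
    refine ⟨c, hc, hcw.trans ?_⟩
    simpa using (KisEquiv.append_append (kisEquiv_cons_append_of_gt hu) p q).symm
termination_by w.length
decreasing_by all_goals subst_vars; simp

inductive Snapshot (n : ℕ) : Type
  | empty : Snapshot n
  | node : (Fin n → Snapshot n) → Snapshot n

def Snapshot.size : Snapshot n → ℕ
  | empty => 0
  | node f => 1 + ∑ j, (f j).size

@[simp] lemma Snapshot.size_empty : (Snapshot.empty : Snapshot n).size = 0 := rfl

@[simp] lemma Snapshot.size_node (f : Fin n → Snapshot n) :
    (Snapshot.node f).size = 1 + ∑ j, (f j).size := rfl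

def restrictAbove (i : Fin n) (s : Fin n → Snapshot n) : Fin n → Snapshot n :=
  fun j => if i < j then s j else .empty

def snapStep (i : Fin n) (s : Fin n → Snapshot n) : Fin n → Snapshot n :=
  Function.update s i (.node (restrictAbove i s))

def snapshot (w : List (Fin n)) : Fin n → Snapshot n :=
  w.foldr snapStep fun _ => .empty

section SnapStep

variable {i j : Fin n} (s : Fin n → Snapshot n)

@[simp] lemma snapStep_self : snapStep i s i = .node (restrictAbove i s) := by
  simp [snapStep]

lemma snapStep_of_ne {k : Fin n} (hk : k ≠ i) : snapStep i s k = s k := by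
  simp [snapStep, hk]

lemma restrictAbove_congr {t : Fin n → Snapshot n} (h : ∀ j, i < j → s j = t j) :
    restrictAbove i s = restrictAbove i t := by
  funext j
  by_cases hj : i < j <;> simp [restrictAbove, hj, h]

@[simp] lemma restrictAbove_snapStep_self : restrictAbove i (snapStep i s) = restrictAbove i s :=
  restrictAbove_congr _ fun _ hj => snapStep_of_ne _ hj.ne'

lemma snapStep_snapStep_self : snapStep i (snapStep i s) = snapStep i s := by
  funext k
  by_cases hk : k = i
  · subst hk; simp
  · simp [snapStep_of_ne _ hk]

lemma snapStep_left (hij : i < j) :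
    snapStep i (snapStep j (snapStep i s)) = snapStep i (snapStep j s) := by
  have hj : restrictAbove j (snapStep i s) = restrictAbove j s :=
    restrictAbove_congr _ fun _ hk => snapStep_of_ne _ (hij.trans hk).ne'
  funext k
  by_cases hki : k = i
  · subst hki
    simp only [snapStep_self]
    congr 1
    refine restrictAbove_congr _ fun l hl => ?_
    by_cases hlj : l = j
    · subst hlj; simp [hj]
    · simp [snapStep_of_ne _ hlj, snapStep_of_ne _ hl.ne']
  by_cases hkj : k = j
  · subst hkj; simp [snapStep_of_ne _ hki, hj]
  · simp [snapStep_of_ne _ hki, snapStep_of_ne _ hkj]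

lemma snapStep_right (hij : i < j) :
    snapStep j (snapStep i (snapStep j s)) = snapStep i (snapStep j s) := by
  funext k
  by_cases hkj : k = j
  · subst hkj
    simp only [snapStep_self, snapStep_of_ne _ hij.ne']
    congr 1
    exact restrictAbove_congr _ fun l hl => by
      simp [snapStep_of_ne _ hl.ne', snapStep_of_ne _ (hij.trans hl).ne']
  · simp [snapStep_of_ne _ hkj]

end SnapStep

lemma KisStep.snapshot_eq {x y : List (Fin n)} (h : KisStep x y) : snapshot x = snapshot y := by
  cases h <;>
    simp [snapshot, List.foldr_append, snapStep_snapStep_self, snapStep_left, snapStep_right, *]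

lemma KisEquiv.snapshot_eq {x y : List (Fin n)} (h : KisEquiv x y) : snapshot x = snapshot y := by
  induction h with
  | rel _ _ h => exact h.snapshot_eq
  | refl => rfl
  | symm _ _ _ ih => exact ih.symm
  | trans _ _ _ _ _ ih₁ ih₂ => exact ih₁.trans ih₂

section Snapshot

variable {i a : Fin n} {w : List (Fin n)}

lemma snapshot_cons (a : Fin n) (w : List (Fin n)) :
    snapshot (a :: w) = snapStep a (snapshot w) := rfl

lemma snapshot_cons_of_ne (h : i ≠ a) : snapshot (a :: w) i = snapshot w i :=
  snapStep_of_ne _ h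

lemma snapshot_append_of_not_mem {p : List (Fin n)} (h : i ∉ p) :
    snapshot (p ++ w) i = snapshot w i := by
  induction p with
  | nil => rfl
  | cons a p ih =>
    rw [List.mem_cons, not_or] at h
    rw [List.cons_append, snapshot_cons_of_ne h.1, ih h.2]

lemma snapshot_of_not_mem (h : i ∉ w) : snapshot w i = .empty := by
  simpa [snapshot] using snapshot_append_of_not_mem (w := []) h

lemma snapshot_eq_empty_iff : snapshot w i = .empty ↔ i ∉ w := by
  refine ⟨fun h hi => ?_, snapshot_of_not_mem⟩
  obtain ⟨p, q, rfl, hp⟩ := List.eq_append_cons_of_mem hi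
  simp [snapshot_append_of_not_mem hp, snapshot_cons] at h

/-- Writing into register `i` does not shrink it. -/
def SizeBounded (s : Fin n → Snapshot n) : Prop :=
  ∀ i, (s i).size ≤ (Snapshot.node (restrictAbove i s)).size

lemma SizeBounded.size_le_snapStep {s : Fin n → Snapshot n} (h : SizeBounded s) (i k : Fin n) :
    (s k).size ≤ (snapStep i s k).size := by
  by_cases hk : k = i
  · subst hk; simpa using h k
  · rw [snapStep_of_ne _ hk]

lemma SizeBounded.snapStep {s : Fin n → Snapshot n} (h : SizeBounded s) (i : Fin n) :
    SizeBounded (snapStep i s) := by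
  intro k
  by_cases hk : k = i
  · subst hk; simp
  · rw [snapStep_of_ne _ hk]
    refine (h k).trans ?_
    simp only [Snapshot.size_node, restrictAbove]
    gcongr with j
    split_ifs
    · exact h.size_le_snapStep i j
    · exact le_rfl

lemma sizeBounded_snapshot (w : List (Fin n)) : SizeBounded (snapshot w) := by
  induction w with
  | nil => intro i; simp [snapshot]
  | cons a w ih => exact ih.snapStep a

lemma size_snapshot_le_append (x y : List (Fin n)) (k : Fin n) :
    (snapshot y k).size ≤ (snapshot (x ++ y) k).size := by
  induction x with
  | nil => rfl
  | cons a x ih => exact ih.trans ((sizeBounded_snapshot _).size_le_snapStep a k)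

end Snapshot

lemma Canonical.of_isInfix {w x : List (Fin n)} (hw : Canonical w) (hx : x <:+: w) :
    Canonical x :=
  fun i u hu => hw i u (hu.trans hx)

theorem Canonical.size_snapshot_lt (a : Fin n) {x y : List (Fin n)} (hw : Canonical (x ++ y))
    (hax : a ∈ x) : (snapshot y a).size < (snapshot (x ++ y) a).size := by
  induction a using WellFoundedGT.induction generalizing x y with
  | _ a ih =>
  obtain ⟨p, q, rfl, hap⟩ := List.eq_append_cons_of_mem hax
  have hcan : Canonical (a :: (q ++ y)) := hw.of_isInfix (by simpa using List.infix_append' p _ [])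
  rw [List.append_assoc, List.cons_append, snapshot_append_of_not_mem hap]
  refine (size_snapshot_le_append q y a).trans_lt ?_
  generalize q ++ y = v at hcan ⊢
  rw [snapshot_cons, snapStep_self]
  by_cases hav : a ∈ v
  swap
  · simp [snapshot_of_not_mem hav]
  obtain ⟨z, r, rfl, haz⟩ := List.eq_append_cons_of_mem hav
  -- the infix `a z a` is special, so `z` contains a larger letter `g`, whose register grows
  obtain ⟨g, hgz, hag⟩ := (hcan a z ⟨[], r, by simp⟩).1
  rw [snapshot_append_of_not_mem haz, snapshot_cons, snapStep_self, Snapshot.size_node,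
    Snapshot.size_node, add_lt_add_iff_left]
  apply Finset.sum_lt_sum
  · intro j _
    unfold restrictAbove
    split_ifs
    · simpa using size_snapshot_le_append (z ++ [a]) r j
    · exact le_rfl
  · refine ⟨g, Finset.mem_univ _, ?_⟩
    simp only [restrictAbove, if_pos hag]
    simpa using @ih g hag (z ++ [a]) r
      (hcan.of_isInfix (by simpa using List.suffix_cons a _ |>.isInfix)) (by simp [hgz])

lemma Canonical.tail {a : Fin n} {v : List (Fin n)} (hw : Canonical (a :: v)) : Canonical v :=
  hw.of_isInfix (List.suffix_cons a v).isInfix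

section Recovery

variable {a : Fin n} {v v' : List (Fin n)}

lemma snapshot_cons_self (a : Fin n) (v : List (Fin n)) :
    snapshot (a :: v) a = .node (restrictAbove a (snapshot (a :: v))) := by
  simp [snapshot_cons]

lemma Canonical.snapshot_cons_ne_of_lt {i : Fin n} (hw : Canonical (a :: v)) (hia : i < a) :
    snapshot (a :: v) i ≠ .node (restrictAbove i (snapshot (a :: v))) := by
  intro h
  have hiv : i ∈ v := by
    have : i ∈ a :: v := by
      rw [← not_not (a := i ∈ _), ← snapshot_eq_empty_iff, h]
      simp
    exact (List.mem_cons.mp this).resolve_left hia.ne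
  obtain ⟨p, y, rfl, hip⟩ := List.eq_append_cons_of_mem hiv
  rw [snapshot_cons_of_ne hia.ne, snapshot_append_of_not_mem hip, snapshot_cons, snapStep_self,
    Snapshot.node.injEq] at h
  have hya : snapshot y a = snapshot (a :: (p ++ i :: y)) a := by
    simpa [restrictAbove, hia] using congrFun h a
  have := Canonical.size_snapshot_lt a (x := a :: p ++ [i]) (y := y) (by simpa using hw) (by simp)
  simp [hya] at this

lemma Canonical.head_eq {a' : Fin n} (hv : Canonical (a :: v)) (hv' : Canonical (a' :: v'))
    (h : snapshot (a :: v) = snapshot (a' :: v')) : a = a' := by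
  by_contra hne
  rcases lt_or_gt_of_ne hne with hlt | hlt
  · exact hv'.snapshot_cons_ne_of_lt hlt (h ▸ snapshot_cons_self a v)
  · exact hv.snapshot_cons_ne_of_lt hlt (h ▸ snapshot_cons_self a' v')

lemma Canonical.exists_snapshot_cons_eq_node (hw : Canonical (a :: v)) (hav : a ∈ v) :
    ∃ b < a, ∃ f, snapshot (a :: v) b = .node f ∧ f a = snapshot v a := by
  obtain ⟨g, r, rfl, hag⟩ := List.eq_append_cons_of_mem hav
  obtain ⟨b, hbg, hba⟩ := (hw a g ⟨[], r, by simp⟩).2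
  obtain ⟨p, g', rfl, hbp⟩ := List.eq_append_cons_of_mem hbg
  refine ⟨b, hba, restrictAbove b (snapshot (g' ++ a :: r)), ?_, ?_⟩
  · rw [snapshot_cons_of_ne hba.ne, List.append_assoc, List.cons_append,
      snapshot_append_of_not_mem hbp, snapshot_cons, snapStep_self]
  · have hag' : a ∉ g' := fun h => hag (by simp [h])
    simp only [restrictAbove, if_pos hba]
    rw [snapshot_append_of_not_mem hag', snapshot_append_of_not_mem hag]

lemma Canonical.eq_or_size_lt_of_snapshot_cons_eq_node {b : Fin n} {f : Fin n → Snapshot n}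
    (hw : Canonical (a :: v)) (hba : b < a) (hb : snapshot (a :: v) b = .node f) :
    f a = snapshot v a ∨ (f a).size < (snapshot v a).size := by
  rw [snapshot_cons_of_ne hba.ne] at hb
  have hbv : b ∈ v := by
    rw [← not_not (a := b ∈ v), ← snapshot_eq_empty_iff, hb]
    simp
  obtain ⟨p, y, rfl, hbp⟩ := List.eq_append_cons_of_mem hbv
  rw [snapshot_append_of_not_mem hbp, snapshot_cons, snapStep_self, Snapshot.node.injEq] at hb
  subst hb
  simp only [restrictAbove, if_pos hba]
  by_cases hap : a ∈ p
  · right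
    simpa using Canonical.size_snapshot_lt a (x := p ++ [b]) (y := y) (by simpa using hw.tail)
      (by simp [hap])
  · left
    simpa using (snapshot_append_of_not_mem (p := p ++ [b]) (w := y) (by simp [hap, hba.ne'])).symm

lemma Canonical.snapshot_tail_eq_or_size_lt (hv : Canonical (a :: v)) (hv' : Canonical (a :: v'))
    (h : snapshot (a :: v) = snapshot (a :: v')) :
    snapshot v a = snapshot v' a ∨ (snapshot v a).size < (snapshot v' a).size := by
  by_cases hav : a ∈ v
  · obtain ⟨b, hba, f, hb, hf⟩ := hv.exists_snapshot_cons_eq_node hav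
    rw [← hf]
    exact hv'.eq_or_size_lt_of_snapshot_cons_eq_node hba (h ▸ hb)
  · rw [snapshot_of_not_mem hav]
    cases snapshot v' a with
    | empty => exact .inl rfl
    | node f => right; simp

lemma Canonical.snapshot_tail_eq (hv : Canonical (a :: v)) (hv' : Canonical (a :: v'))
    (h : snapshot (a :: v) = snapshot (a :: v')) : snapshot v = snapshot v' := by
  funext k
  by_cases hk : k = a
  · subst hk
    rcases hv.snapshot_tail_eq_or_size_lt hv' h with h₁ | h₁
    · exact h₁
    rcases hv'.snapshot_tail_eq_or_size_lt hv h.symm with h₂ | h₂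
    · exact h₂.symm
    · omega
  · rw [← snapshot_cons_of_ne hk, h, snapshot_cons_of_ne hk]

end Recovery

theorem Canonical.eq_of_snapshot_eq {v v' : List (Fin n)} (hv : Canonical v)
    (hv' : Canonical v') (h : snapshot v = snapshot v') : v = v' := by
  induction v generalizing v' with
  | nil =>
    cases v' with
    | nil => rfl
    | cons b t => simpa [snapshot_cons, snapshot] using congrFun h b
  | cons a v ih =>
    cases v' with
    | nil => simpa [snapshot_cons, snapshot] using congrFun h a
    | cons a' v' =>
      obtain rfl := hv.head_eq hv' h
      rw [ih hv.tail hv'.tail (hv.snapshot_tail_eq hv' h)]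

theorem stmt_1_general {n : ℕ} (w : List (Fin n)) :
    ∃! v : List (Fin n), Canonical v ∧ KisEquiv v w := by
  obtain ⟨c, hc, hcw⟩ := exists_canonical_kisEquiv w
  refine ⟨c, ⟨hc, hcw⟩, fun v ⟨hv, hvw⟩ => ?_⟩
  exact hv.eq_of_snapshot_eq hc (hvw.trans hcw.symm).snapshot_eq

/-- Every word has a unique canonical form: a unique canonical word Kiselman-equivalent
to it. -/
theorem stmt_1 {n : ℕ} (hn : 1 ≤ n) (w : List (Fin n)) :
    ∃! v : List (Fin n), Canonical v ∧ KisEquiv v w :=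
  stmt_1_general w
end

section
/- If v is a canonical word over Fin n and v ~ w, then v is a sublist (quasi-subword, List.Sublist) of w. -/
variable {n : ℕ}

/-!
Read from left to right, each Kiselman relation deletes one letter `j` from a factor `j u j`
in which all letters of `u` are `> j` (the right `j` goes) or all are `< j` (the left `j` goes).
These deletions, for arbitrary `u`, form a rewriting system with the diamond property: two
different deletions either give the same word or each stays possible after the other. By
Church–Rosser, Kiselman-equivalent words have a common descendant. A canonical word admits no
deletion, since every factor `j u j` of it has letters on both sides of `j` in `u`; so it is that
common descendant, and deletions only pass to sublists.
-/

namespace List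

variable {α : Type*}

/-- The position of the entry `l[m]` in `l.eraseIdx d`, for `m ≠ d`. -/
def idxAfterErase (d m : ℕ) : ℕ := if m < d then m else m - 1

theorem getElem?_eraseIdx_idxAfterErase (l : List α) {d m : ℕ} (h : m ≠ d) :
    (l.eraseIdx d)[idxAfterErase d m]? = l[m]? := by
  unfold idxAfterErase
  split_ifs with hm
  · rw [getElem?_eraseIdx_of_lt hm]
  · rw [getElem?_eraseIdx_of_ge (by omega)]
    congr 1
    omega

theorem idxAfterErase_lt_idxAfterErase_iff {d p q : ℕ} (hp : p ≠ d) (hq : q ≠ d) :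
    idxAfterErase d p < idxAfterErase d q ↔ p < q := by
  unfold idxAfterErase
  split_ifs <;> omega

theorem exists_idxAfterErase_of_getElem?_eraseIdx {l : List α} {d r : ℕ} {x : α}
    (h : (l.eraseIdx d)[r]? = some x) : ∃ m ≠ d, idxAfterErase d m = r ∧ l[m]? = some x := by
  by_cases hr : r < d
  · exact ⟨r, by omega, by simp [idxAfterErase, hr], by rwa [getElem?_eraseIdx_of_lt hr] at h⟩
  · refine ⟨r + 1, by omega, by unfold idxAfterErase; split_ifs <;> omega, ?_⟩
    rwa [getElem?_eraseIdx_of_ge (by omega)] at h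

theorem eraseIdx_eq_eraseIdx_succ {l : List α} {p : ℕ} {j : α}
    (h : l[p]? = some j) (h' : l[p + 1]? = some j) : l.eraseIdx p = l.eraseIdx (p + 1) := by
  obtain ⟨hp, rfl⟩ := List.getElem?_eq_some_iff.mp h
  obtain ⟨hp', hpp⟩ := List.getElem?_eq_some_iff.mp h'
  rw [eraseIdx_eq_take_drop_succ, eraseIdx_eq_take_drop_succ, drop_eq_getElem_cons hp', hpp,
    take_add_one, getElem?_eq_getElem hp]
  simp only [Option.toList_some, append_assoc, singleton_append]

theorem eraseIdx_eraseIdx_succ : ∀ (l : List α) {i j : ℕ}, i ≤ j →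
    (l.eraseIdx (j + 1)).eraseIdx i = (l.eraseIdx i).eraseIdx j
  | [], _, _, _ => by simp
  | _ :: _, 0, _, _ => by simp
  | _ :: l, i + 1, j + 1, h => by
    simp only [eraseIdx_cons_succ, eraseIdx_eraseIdx_succ l (Nat.le_of_succ_le_succ h)]

theorem eraseIdx_eraseIdx_comm (l : List α) {d d' : ℕ} (h : d ≠ d') :
    (l.eraseIdx d').eraseIdx (idxAfterErase d' d) =
      (l.eraseIdx d).eraseIdx (idxAfterErase d d') := by
  rcases Nat.lt_or_gt_of_ne h with h | h
  · obtain ⟨k, rfl⟩ : ∃ k, d' = k + 1 := ⟨d' - 1, by omega⟩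
    simp only [idxAfterErase, if_pos h, if_neg (show ¬k + 1 < d by omega), Nat.add_sub_cancel]
    exact eraseIdx_eraseIdx_succ l (by omega)
  · obtain ⟨k, rfl⟩ : ∃ k, d = k + 1 := ⟨d - 1, by omega⟩
    simp only [idxAfterErase, if_pos h, if_neg (show ¬k + 1 < d' by omega), Nat.add_sub_cancel]
    exact (eraseIdx_eraseIdx_succ l (by omega)).symm

end List

open List

variable {α : Type*}

def Enclosure (P : α → Prop) (l : List α) (j : α) (p q : ℕ) : Prop :=
  p < q ∧ l[p]? = some j ∧ l[q]? = some j ∧ ∀ r x, p < r → r < q → l[r]? = some x → P x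

namespace Enclosure

variable {P Q : α → Prop} {l : List α} {j : α} {p q : ℕ}

theorem eraseIdx {d : ℕ} (hpq : p < q) (hp : l[p]? = some j) (hq : l[q]? = some j)
    (hpd : p ≠ d) (hqd : q ≠ d)
    (hP : ∀ r x, p < r → r < q → r ≠ d → l[r]? = some x → P x) :
    Enclosure P (l.eraseIdx d) j (idxAfterErase d p) (idxAfterErase d q) := by
  refine ⟨(idxAfterErase_lt_idxAfterErase_iff hpd hqd).2 hpq,
    by rwa [getElem?_eraseIdx_idxAfterErase _ hpd], by rwa [getElem?_eraseIdx_idxAfterErase _ hqd],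
    fun r x hpr hrq hx => ?_⟩
  obtain ⟨m, hmd, rfl, hm⟩ := exists_idxAfterErase_of_getElem?_eraseIdx hx
  exact hP m x ((idxAfterErase_lt_idxAfterErase_iff hpd hmd).1 hpr)
    ((idxAfterErase_lt_idxAfterErase_iff hmd hqd).1 hrq) hmd hm

theorem eraseIdx_of_ne (h : Enclosure P l j p q) {d : ℕ} (hpd : p ≠ d) (hqd : q ≠ d) :
    Enclosure P (l.eraseIdx d) j (idxAfterErase d p) (idxAfterErase d q) :=
  eraseIdx h.1 h.2.1 h.2.2.1 hpd hqd fun r x hpr hrq _ => h.2.2.2 r x hpr hrq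

theorem eraseIdx_trans {m : ℕ} (h : Enclosure P l j p m) (h' : Enclosure P l j m q) :
    Enclosure P (l.eraseIdx m) j (idxAfterErase m p) (idxAfterErase m q) := by
  refine eraseIdx (h.1.trans h'.1) h.2.1 h'.2.2.1 h.1.ne h'.1.ne' fun r x hpr hrq hrm hx => ?_
  rcases Nat.lt_or_gt_of_ne hrm with hr | hr
  · exact h.2.2.2 r x hpr hr hx
  · exact h'.2.2.2 r x hr hrq hx

theorem right_unique {q' : ℕ} (h : Enclosure P l j p q) (h' : Enclosure Q l j p q')
    (hP : ¬P j) (hQ : ¬Q j) : q = q' := by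
  by_contra hne
  rcases Nat.lt_or_gt_of_ne hne with hlt | hlt
  · exact hQ (h'.2.2.2 q j h.1 hlt h.2.2.1)
  · exact hP (h.2.2.2 q' j h'.1 hlt h'.2.2.1)

theorem left_unique {p' : ℕ} (h : Enclosure P l j p q) (h' : Enclosure Q l j p' q)
    (hP : ¬P j) (hQ : ¬Q j) : p = p' := by
  by_contra hne
  rcases Nat.lt_or_gt_of_ne hne with hlt | hlt
  · exact hP (h.2.2.2 p' j hlt h'.1 h'.2.1)
  · exact hQ (h'.2.2.2 p j hlt h.1 h.2.1)

theorem eraseIdx_left_eq_eraseIdx_right (h : Enclosure P l j p q) (h' : Enclosure Q l j p q)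
    (hPQ : ∀ x, P x → Q x → False) : l.eraseIdx p = l.eraseIdx q := by
  have hq : q = p + 1 := by
    by_contra hne
    have hpq := h.1
    have hlen : q < l.length := (List.getElem?_eq_some_iff.mp h.2.2.1).1
    have hx : l[p + 1]? = some l[p + 1] := getElem?_eq_getElem (by omega)
    exact hPQ _ (h.2.2.2 _ _ (by omega) (by omega) hx) (h'.2.2.2 _ _ (by omega) (by omega) hx)
  subst hq
  exact eraseIdx_eq_eraseIdx_succ h.2.1 h.2.2.1

theorem exists_infix (h : Enclosure P l j p q) :
    ∃ u, [j] ++ u ++ [j] <:+: l ∧ ∀ x ∈ u, P x := by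
  obtain ⟨hpq, hp, hq, hP⟩ := h
  obtain ⟨hpl, hpj⟩ := List.getElem?_eq_some_iff.mp hp
  obtain ⟨hql, hqj⟩ := List.getElem?_eq_some_iff.mp hq
  set u := (l.drop (p + 1)).take (q - (p + 1))
  refine ⟨u, ⟨l.take p, l.drop (q + 1), ?_⟩, fun x hx => ?_⟩
  · have hdrop : l.drop (p + 1) = u ++ l.drop q := by
      conv_lhs => rw [← take_append_drop (q - (p + 1)) (l.drop (p + 1)), drop_drop]
      congr 2
      omega
    conv_rhs => rw [← take_append_drop p l, drop_eq_getElem_cons hpl, hpj, hdrop,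
      drop_eq_getElem_cons hql, hqj]
    simp
  · obtain ⟨m, hm⟩ := mem_iff_getElem?.mp hx
    have hmlt : m < q - (p + 1) := by
      by_contra hge
      rw [getElem?_take, if_neg hge] at hm
      exact absurd hm (by simp)
    rw [getElem?_take, if_pos hmlt, getElem?_drop] at hm
    exact hP _ x (by omega) (by omega) hm

theorem append_append {m : List α} (h : Enclosure P m j p q) (u v : List α) :
    Enclosure P (u ++ m ++ v) j (u.length + p) (u.length + q) := by
  obtain ⟨hpq, hp, hq, hP⟩ := h
  have hqm : q < m.length := (List.getElem?_eq_some_iff.mp hq).1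
  have shift : ∀ k < m.length, (u ++ m ++ v)[u.length + k]? = m[k]? := fun k hk => by
    rw [append_assoc, getElem?_append_right (by omega), Nat.add_sub_cancel_left,
      getElem?_append_left hk]
  refine ⟨by omega, by rwa [shift p (by omega)], by rwa [shift q hqm], fun r x hpr hrq hx => ?_⟩
  obtain ⟨k, rfl⟩ : ∃ k, r = u.length + k := ⟨r - u.length, by omega⟩
  exact hP k x (by omega) (by omega) (by rwa [shift k (by omega)] at hx)

end Enclosure

section Deletion

variable [Preorder α]

inductive IsDeletable (l : List α) : ℕ → Prop
  | right {j : α} {p q : ℕ} : Enclosure (j < ·) l j p q → IsDeletable l q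
  | left {j : α} {p q : ℕ} : Enclosure (· < j) l j p q → IsDeletable l p

def DeleteStep (l l' : List α) : Prop := ∃ d, IsDeletable l d ∧ l' = l.eraseIdx d

theorem IsDeletable.lt_length {l : List α} {d : ℕ} (h : IsDeletable l d) : d < l.length := by
  cases h with
  | right e => exact (List.getElem?_eq_some_iff.mp e.2.2.1).1
  | left e => exact e.1.trans (List.getElem?_eq_some_iff.mp e.2.2.1).1

theorem IsDeletable.eraseIdx {l : List α} {d d' : ℕ} (h : IsDeletable l d)
    (h' : IsDeletable l d') (hne : d ≠ d') :
    l.eraseIdx d = l.eraseIdx d' ∨ IsDeletable (l.eraseIdx d) (idxAfterErase d d') := by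
  cases h' with
  | @right j' p' _ e' =>
    by_cases hd : d = p'
    · subst hd
      cases h with
      | right e =>
        obtain rfl : j' = _ := Option.some_inj.mp (e'.2.1.symm.trans e.2.2.1)
        exact Or.inr (.right (e.eraseIdx_trans e'))
      | left e =>
        obtain rfl : j' = _ := Option.some_inj.mp (e'.2.1.symm.trans e.2.1)
        obtain rfl := e.right_unique e' (lt_irrefl _) (lt_irrefl _)
        exact Or.inl (e'.eraseIdx_left_eq_eraseIdx_right e fun _ h h' => lt_asymm h h')
    · exact Or.inr (.right (e'.eraseIdx_of_ne (Ne.symm hd) (Ne.symm hne)))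
  | @left j' _ q' e' =>
    by_cases hd : d = q'
    · subst hd
      cases h with
      | right e =>
        obtain rfl : j' = _ := Option.some_inj.mp (e'.2.2.1.symm.trans e.2.2.1)
        obtain rfl := e.left_unique e' (lt_irrefl _) (lt_irrefl _)
        exact Or.inl (e.eraseIdx_left_eq_eraseIdx_right e' fun _ h h' => lt_asymm h h').symm
      | left e =>
        obtain rfl : j' = _ := Option.some_inj.mp (e'.2.2.1.symm.trans e.2.1)
        exact Or.inr (.left (e'.eraseIdx_trans e))
    · exact Or.inr (.left (e'.eraseIdx_of_ne (Ne.symm hne) (Ne.symm hd)))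

theorem deleteStep_diamond (l l₁ l₂ : List α) (h₁ : DeleteStep l l₁) (h₂ : DeleteStep l l₂) :
    ∃ l₃, Relation.ReflGen DeleteStep l₁ l₃ ∧ Relation.ReflTransGen DeleteStep l₂ l₃ := by
  obtain ⟨d₁, hd₁, rfl⟩ := h₁
  obtain ⟨d₂, hd₂, rfl⟩ := h₂
  by_cases hd : d₁ = d₂
  · subst hd
    exact ⟨_, .refl, .refl⟩
  rcases hd₁.eraseIdx hd₂ hd with heq | h₁₂
  · exact ⟨_, .refl, heq ▸ .refl⟩
  rcases hd₂.eraseIdx hd₁ (Ne.symm hd) with heq | h₂₁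
  · exact ⟨_, .refl, heq ▸ .refl⟩
  exact ⟨_, .single ⟨_, h₁₂, rfl⟩, .single ⟨_, h₂₁, (eraseIdx_eraseIdx_comm l hd).symm⟩⟩

theorem DeleteStep.append_append {m m' : List α} (h : DeleteStep m m') (u v : List α) :
    DeleteStep (u ++ m ++ v) (u ++ m' ++ v) := by
  obtain ⟨d, hd, rfl⟩ := h
  refine ⟨u.length + d, ?_, ?_⟩
  · cases hd with
    | right e => exact .right (e.append_append u v)
    | left e => exact .left (e.append_append u v)
  · simp only [append_assoc]
    rw [eraseIdx_append_of_length_le (Nat.le_add_right _ _), Nat.add_sub_cancel_left,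
      eraseIdx_append_of_lt_length hd.lt_length]

theorem sublist_of_reflTransGen_deleteStep {l l' : List α}
    (h : Relation.ReflTransGen DeleteStep l l') : l' <+ l := by
  induction h with
  | refl => exact Sublist.refl _
  | tail _ hstep ih =>
    obtain ⟨d, _, rfl⟩ := hstep
    exact (eraseIdx_sublist _ d).trans ih

end Deletion

theorem KisStep.deleteStep {n : ℕ} {x y : List (Fin n)} (h : KisStep x y) : DeleteStep x y := by
  cases h with
  | idem u v i =>
    refine DeleteStep.append_append ⟨1, .right (p := 0) ⟨by omega, rfl, rfl, ?_⟩, rfl⟩ u v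
    intro r x h h'
    omega
  | left u v i j hij =>
    refine DeleteStep.append_append ⟨2, .right (p := 0) ⟨by omega, rfl, rfl, ?_⟩, rfl⟩ u v
    intro r x h h' hx
    obtain rfl : r = 1 := by omega
    cases hx
    exact hij
  | right u v i j hij =>
    refine DeleteStep.append_append ⟨0, .left (q := 2) ⟨by omega, rfl, rfl, ?_⟩, rfl⟩ u v
    intro r x h h' hx
    obtain rfl : r = 1 := by omega
    cases hx
    exact hij

theorem Canonical.not_isDeletable {n : ℕ} {v : List (Fin n)} (hv : Canonical v) (d : ℕ) :
    ¬IsDeletable v d := by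
  intro hd
  cases hd with
  | right e =>
    obtain ⟨u, hu, hP⟩ := e.exists_infix
    obtain ⟨x, hx, hxj⟩ := (hv _ u hu).2
    exact lt_asymm hxj (hP x hx)
  | left e =>
    obtain ⟨u, hu, hP⟩ := e.exists_infix
    obtain ⟨x, hx, hjx⟩ := (hv _ u hu).1
    exact lt_asymm hjx (hP x hx)

theorem stmt_3_general {n : ℕ} (v w : List (Fin n))
    (hv : Canonical v) (hvw : KisEquiv v w) :
    v.Sublist w := by
  have hdel : Relation.EqvGen DeleteStep v w :=
    Relation.EqvGen.mono (fun _ _ => KisStep.deleteStep) _ _ hvw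
  obtain ⟨u, hvu, hwu⟩ : Relation.Join (Relation.ReflTransGen DeleteStep) v w :=
    (Relation.equivalence_join_reflTransGen deleteStep_diamond).eqvGen_iff.1
      (Relation.EqvGen.mono (fun _ b h => ⟨b, .single h, .refl⟩) _ _ hdel)
  obtain rfl : u = v := by
    rcases hvu.cases_head with h | ⟨_, ⟨d, hd, _⟩, _⟩
    · exact h.symm
    · exact absurd hd (hv.not_isDeletable d)
  exact sublist_of_reflTransGen_deleteStep hwu

/-- The canonical form of a word is a quasi-subword (sublist) of it. -/
theorem stmt_3 {n : ℕ} (hn : 1 ≤ n) (v w : List (Fin n))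
    (hv : Canonical v) (hvw : KisEquiv v w) :
    v.Sublist w :=
  stmt_3_general v w hv hvw
end

section
/- Let y be a canonical word over Fin n, let k be a letter, and let x = filter≥k y be the word obtained from y by deleting all letters strictly less than k. Then every infix of x of the form [i] ++ u ++ [i] is either special or satisfies that every letter occurring in u is ≥ i. -/
variable {n : ℕ}

/-
An infix `[i] ++ u ++ [i]` of `filterGE k y` lifts to an infix `[i] ++ v ++ [i]` of `y` with
`filterGE k v = u` (take the two occurrences of `i` in `y` that survive as the bracketing ones).
Canonicity gives a letter `j > i` in `v`, and `i ≥ k` since `i` survived the filter, so `j`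
survives too and lies in `u`. Hence `u` is special as soon as it has a letter `< i`.
-/

theorem List.exists_infix_filter_eq_of_infix_filter {α : Type*} {p : α → Bool} {l u : List α}
    {a : α} (h : [a] ++ u ++ [a] <:+: l.filter p) :
    ∃ v, [a] ++ v ++ [a] <:+: l ∧ v.filter p = u := by
  obtain ⟨s, t, hst⟩ := h
  have hl : l.filter p = s ++ a :: (u ++ a :: t) := by simp [← hst]
  obtain ⟨l₁, l₂, rfl, -, hl₂⟩ := List.filter_eq_append_iff.mp hl
  obtain ⟨m₁, m₂, rfl, -, -, hm₂⟩ := List.filter_eq_cons_iff.mp hl₂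
  obtain ⟨r₁, r₂, rfl, hr₁, hr₂⟩ := List.filter_eq_append_iff.mp hm₂
  obtain ⟨q₁, q₂, rfl, hq₁, -, -⟩ := List.filter_eq_cons_iff.mp hr₂
  refine ⟨r₁ ++ q₁, ⟨l₁ ++ m₁, q₂, by simp⟩, ?_⟩
  rw [List.filter_append, hr₁, List.filter_eq_nil_iff.mpr hq₁, List.append_nil]

theorem Canonical.exists_gt_of_infix_filterGE {y : List (Fin n)} (hy : Canonical y)
    {k i : Fin n} {u : List (Fin n)} (h : [i] ++ u ++ [i] <:+: filterGE k y) :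
    ∃ j ∈ u, i < j := by
  have hki : k ≤ i := by
    have hi : i ∈ filterGE k y := h.subset (by simp)
    simpa [filterGE] using (List.mem_filter.mp hi).2
  obtain ⟨v, hv, rfl⟩ := List.exists_infix_filter_eq_of_infix_filter h
  obtain ⟨⟨j, hjv, hij⟩, -⟩ := hy i v hv
  exact ⟨j, List.mem_filter.mpr ⟨hjv, decide_eq_true (hki.trans hij.le)⟩, hij⟩

theorem stmt_6_general {n : ℕ} (y : List (Fin n)) (hy : Canonical y) (k : Fin n)
    (i : Fin n) (u : List (Fin n)) (hinf : ([i] ++ u ++ [i]) <:+: filterGE k y) :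
    Special i u ∨ ∀ a ∈ u, i ≤ a := by
  by_cases hge : ∀ a ∈ u, i ≤ a
  · exact .inr hge
  · push Not at hge
    exact .inl ⟨hy.exists_gt_of_infix_filterGE hinf, hge⟩

/-- If `y` is canonical and `x = filterGE k y`, then every infix of `x` of the form
`[i] ++ u ++ [i]` is either special or has all letters of `u` at least `i`. -/
theorem stmt_6 {n : ℕ} (hn : 1 ≤ n) (y : List (Fin n)) (hy : Canonical y) (k : Fin n)
    (i : Fin n) (u : List (Fin n)) (hinf : ([i] ++ u ++ [i]) <:+: filterGE k y) :
    Special i u ∨ ∀ a ∈ u, i ≤ a :=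
  stmt_6_general y hy k i u hinf
end

section
/- Let u, v be words over Fin n such that u ++ [0] ++ v is canonical. If c is canonical and c ~ u ++ v, then u is a prefix of c. -/
/-!
Orient the Kiselman relations as deletions of a single letter: an occurrence of `i` may be
deleted when the nearest letter `≤ i` before it, or the nearest letter `≥ i` after it, is another
`i` (the rules `i β i → i β` for `β > i` and `i β i → β i` for `β < i`). Two different deletions
from the same word either give the same word or are joined by one further deletion each, so the
system is confluent; since canonical words are exactly the words admitting no deletion, every
Kiselman class contains at most one canonical word.

Because `0` is the least letter and `u 0 v` is canonical, no letter of `u v` can be deleted by the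
second rule, and deletions by the first rule preserve this. A first-rule deletion never touches
the canonical prefix `u`, since its pair `i β i` with `β > i` would lie inside `u`. So reducing
`u v` by first-rule deletions until it is canonical reaches the canonical word of its class, and
that word still begins with `u`.
-/

variable {n : ℕ}

theorem List.append_cons_eq_append_cons {α : Type*} {x₁ x₂ y₁ y₂ : List α} {a b : α}
    (h : x₁ ++ a :: y₁ = x₂ ++ b :: y₂) :
    (x₁ = x₂ ∧ a = b ∧ y₁ = y₂) ∨ (∃ m, x₂ = x₁ ++ a :: m ∧ y₁ = m ++ b :: y₂) ∨
      (∃ m, x₁ = x₂ ++ b :: m ∧ y₂ = m ++ a :: y₁) := by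
  rcases List.append_eq_append_iff.mp h with ⟨_ | ⟨c, m⟩, rfl, h⟩ | ⟨_ | ⟨c, m⟩, rfl, h⟩
  all_goals simp at h
  all_goals aesop

theorem List.append_cons_eq_append {α : Type*} {x₁ x₂ y₁ y₂ : List α} {a : α}
    (h : x₁ ++ a :: y₁ = x₂ ++ y₂) :
    (∃ m, x₂ = x₁ ++ a :: m ∧ y₁ = m ++ y₂) ∨ (∃ m, x₁ = x₂ ++ m ∧ y₂ = m ++ a :: y₁) := by
  rcases List.append_eq_append_iff.mp h with ⟨_ | ⟨c, m⟩, rfl, h'⟩ | ⟨m, rfl, rfl⟩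
  · exact Or.inr ⟨[], by simp, by simpa using h'.symm⟩
  · obtain ⟨rfl, rfl⟩ := List.cons.inj h'
    exact Or.inl ⟨m, rfl, rfl⟩
  · exact Or.inr ⟨m, rfl, rfl⟩

open List Relation

section Absorbed

variable {α : Type*} [LinearOrder α]

/-- An occurrence of `i` preceded by `x` is deleted by the rule `i β i → i β` (`β > i`). -/
def AbsorbedLeft (x : List α) (i : α) : Prop :=
  x.reverse.find? (· ≤ i) = some i

/-- An occurrence of `i` followed by `y` is deleted by the rule `i β i → β i` (`β < i`). -/
def AbsorbedRight (i : α) (y : List α) : Prop :=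
  y.find? (i ≤ ·) = some i

def Absorbed (x : List α) (i : α) (y : List α) : Prop :=
  AbsorbedLeft x i ∨ AbsorbedRight i y

lemma absorbedLeft_iff {x : List α} {i : α} :
    AbsorbedLeft x i ↔ ∃ p β, x = p ++ i :: β ∧ ∀ b ∈ β, i < b := by
  simp only [AbsorbedLeft, find?_eq_some_iff_append, decide_eq_true_eq, le_refl, true_and,
    Bool.not_eq_true', decide_eq_false_iff_not, not_le]
  constructor
  · rintro ⟨as, bs, h, has⟩
    exact ⟨bs.reverse, as.reverse, by simpa using congrArg reverse h, by simpa using has⟩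
  · rintro ⟨p, β, rfl, hβ⟩
    exact ⟨β.reverse, p.reverse, by simp, by simpa using hβ⟩

lemma absorbedRight_iff {y : List α} {i : α} :
    AbsorbedRight i y ↔ ∃ β s, y = β ++ i :: s ∧ ∀ b ∈ β, b < i := by
  simp [AbsorbedRight, find?_eq_some_iff_append]

lemma absorbedLeft_of_forall_le {s u : List α} {i : α} (hu : ∀ b ∈ u, i ≤ b) :
    AbsorbedLeft (s ++ i :: u) i := by
  unfold AbsorbedLeft
  rcases hf : u.reverse.find? (· ≤ i) with _ | k
  · simp [hf]
  · have hki : k ≤ i := by simpa using find?_some hf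
    have hk : k ∈ u := mem_reverse.mp (mem_of_find?_eq_some hf)
    simp [hf, le_antisymm hki (hu k hk)]

lemma absorbedRight_of_forall_le {u t : List α} {i : α} (hu : ∀ b ∈ u, b ≤ i) :
    AbsorbedRight i (u ++ i :: t) := by
  unfold AbsorbedRight
  rcases hf : u.find? (i ≤ ·) with _ | k
  · simp [find?_append, hf]
  · have hik : i ≤ k := by simpa using find?_some hf
    simp [find?_append, hf, le_antisymm (hu k (mem_of_find?_eq_some hf)) hik]

lemma AbsorbedLeft.append {x m : List α} {i : α} (h : AbsorbedLeft x i)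
    (hm : ∀ b ∈ m, i < b) : AbsorbedLeft (x ++ m) i := by
  have : m.reverse.find? (· ≤ i) = none := by simpa [find?_eq_none] using hm
  simpa [AbsorbedLeft, find?_append, this] using h

lemma AbsorbedRight.append_left {m y : List α} {i : α} (h : AbsorbedRight i y)
    (hm : ∀ b ∈ m, b < i) : AbsorbedRight i (m ++ y) := by
  have : m.find? (i ≤ ·) = none := by simpa [find?_eq_none] using hm
  simpa [AbsorbedRight, find?_append, this] using h

lemma absorbedLeft_append_cons {x m : List α} {i j : α} (h : AbsorbedLeft (x ++ i :: m) j) :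
    (i = j ∧ ∀ b ∈ m, j < b) ∨ AbsorbedLeft (x ++ m) j := by
  unfold AbsorbedLeft at *
  simp only [reverse_append, reverse_cons, find?_append] at *
  rcases hm : m.reverse.find? (· ≤ j) with _ | k
  · simp_all [find?_eq_none]
    tauto
  · simp_all

lemma absorbedRight_append_cons {m y : List α} {i j : α} (h : AbsorbedRight i (m ++ j :: y)) :
    (i = j ∧ ∀ b ∈ m, b < i) ∨ AbsorbedRight i (m ++ y) := by
  unfold AbsorbedRight at *
  simp only [find?_append] at *
  rcases hm : m.find? (i ≤ ·) with _ | k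
  · simp_all [find?_eq_none]
    tauto
  · simp_all

lemma eq_nil_of_absorbedLeft {x m : List α} {i : α} (h : AbsorbedLeft (x ++ i :: m) i)
    (hm : ∀ b ∈ m, b < i) : m = [] := by
  rcases m.eq_nil_or_concat with rfl | ⟨l, b, rfl⟩
  · rfl
  · have hb := hm b (by simp)
    simp [AbsorbedLeft, hb.le, hb.ne] at h

lemma eq_nil_of_absorbedRight {m y : List α} {i : α} (h : AbsorbedRight i (m ++ i :: y))
    (hm : ∀ b ∈ m, i < b) : m = [] := by
  cases m with
  | nil => rfl
  | cons b l =>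
    have hb := hm b (by simp)
    simp [AbsorbedRight, hb.le, hb.ne'] at h

lemma AbsorbedLeft.exists_le {x m : List α} {i j : α} (h : AbsorbedLeft (x ++ j :: m) i)
    (hji : j < i) : ∃ b ∈ m, j ≤ b := by
  by_contra! hm
  rcases m.eq_nil_or_concat with rfl | ⟨l, b, rfl⟩
  · simp [AbsorbedLeft, hji.le, hji.ne] at h
  · have hb : b < i := (hm b (by simp)).trans hji
    simp [AbsorbedLeft, hb.le, hb.ne] at h

lemma AbsorbedRight.insert {m y : List α} {j k : α} (h : AbsorbedRight j (m ++ y))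
    (hk : j < k → ∃ b ∈ m, j ≤ b) : AbsorbedRight j (m ++ k :: y) := by
  unfold AbsorbedRight at *
  simp only [find?_append] at *
  rcases hm : m.find? (j ≤ ·) with _ | b
  · simp only [hm, find?_cons, Option.none_or] at h ⊢
    rw [find?_eq_none] at hm
    rcases lt_trichotomy j k with hjk | rfl | hkj
    · obtain ⟨b, hb, hjb⟩ := hk hjk
      exact absurd hjb (by simpa using hm b hb)
    · simp
    · simpa [hkj.not_ge] using h
  · simp_all

lemma absorbed_of_drop_left {x m y : List α} {i j : α}
    (hi : Absorbed x i (m ++ j :: y)) (hj : Absorbed (x ++ i :: m) j y) :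
    (i = j ∧ m = []) ∨ Absorbed (x ++ m) j y := by
  rcases hj with hj | hj
  · rcases absorbedLeft_append_cons hj with ⟨rfl, hm⟩ | hj
    · rcases hi with hi | hi
      · exact Or.inr (Or.inl (hi.append hm))
      · exact Or.inl ⟨rfl, eq_nil_of_absorbedRight hi hm⟩
    · exact Or.inr (Or.inl hj)
  · exact Or.inr (Or.inr hj)

lemma absorbed_of_drop_right {x m y : List α} {i j : α}
    (hi : Absorbed x i (m ++ j :: y)) (hj : Absorbed (x ++ i :: m) j y) :
    (i = j ∧ m = []) ∨ Absorbed x i (m ++ y) := by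
  rcases hi with hi | hi
  · exact Or.inr (Or.inl hi)
  · rcases absorbedRight_append_cons hi with ⟨rfl, hm⟩ | hi
    · rcases hj with hj | hj
      · exact Or.inl ⟨rfl, eq_nil_of_absorbedLeft hj hm⟩
      · exact Or.inr (Or.inr (hj.append_left hm))
    · exact Or.inr (Or.inr hi)

end Absorbed

section KisRed

variable {α : Type*} [LinearOrder α]

def KisRed (a b : List α) : Prop :=
  ∃ x i y, a = x ++ i :: y ∧ b = x ++ y ∧ Absorbed x i y

lemma kisRed_diamond_of_absorbed {x m y : List α} {i j : α}
    (hi : Absorbed x i (m ++ j :: y)) (hj : Absorbed (x ++ i :: m) j y) :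
    x ++ (m ++ j :: y) = x ++ i :: m ++ y ∨
      ∃ d, KisRed (x ++ (m ++ j :: y)) d ∧ KisRed (x ++ i :: m ++ y) d := by
  rcases absorbed_of_drop_left hi hj with ⟨rfl, rfl⟩ | hj'
  · exact Or.inl (by simp)
  rcases absorbed_of_drop_right hi hj with ⟨rfl, rfl⟩ | hi'
  · exact Or.inl (by simp)
  exact Or.inr ⟨x ++ m ++ y, ⟨x ++ m, j, y, by simp, rfl, hj'⟩,
    ⟨x, i, m ++ y, by simp, by simp, hi'⟩⟩

lemma kisRed_diamond {a b c : List α} (hb : KisRed a b) (hc : KisRed a c) :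
    b = c ∨ ∃ d, KisRed b d ∧ KisRed c d := by
  obtain ⟨x₁, i, y₁, rfl, rfl, hi⟩ := hb
  obtain ⟨x₂, j, y₂, ha, rfl, hj⟩ := hc
  rcases append_cons_eq_append_cons ha with ⟨rfl, rfl, rfl⟩ | ⟨m, rfl, rfl⟩ | ⟨m, rfl, rfl⟩
  · exact Or.inl rfl
  · exact kisRed_diamond_of_absorbed hi hj
  · rcases kisRed_diamond_of_absorbed hj hi with h | ⟨d, h₁, h₂⟩
    · exact Or.inl h.symm
    · exact Or.inr ⟨d, h₂, h₁⟩

lemma equivalence_join_kisRed : Equivalence (Join (ReflTransGen (KisRed (α := α)))) :=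
  equivalence_join_reflTransGen fun _ _ _ hb hc => by
    rcases kisRed_diamond hb hc with rfl | ⟨d, hbd, hcd⟩
    · exact ⟨_, .refl, .refl⟩
    · exact ⟨d, .single hbd, .single hcd⟩

end KisRed

lemma kisRed_of_kisStep {a b : List (Fin n)} (h : KisStep a b) : KisRed a b := by
  cases h with
  | idem u v i => exact ⟨u ++ [i], i, v, by simp, by simp, Or.inl (by simp [AbsorbedLeft])⟩
  | left u v i j hij =>
    exact ⟨u ++ [i, j], i, v, by simp, by simp, Or.inl (by simp [AbsorbedLeft, hij.not_ge])⟩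
  | right u v i j hij =>
    exact ⟨u, j, i :: j :: v, by simp, by simp, Or.inr (by simp [AbsorbedRight, hij.not_ge])⟩

lemma KisEquiv.join_kisRed {a b : List (Fin n)} (h : KisEquiv a b) :
    Join (ReflTransGen KisRed) a b :=
  equivalence_join_kisRed.eqvGen_iff.mp
    (EqvGen.mono (fun _ _ hs => ⟨_, .single (kisRed_of_kisStep hs), .refl⟩) _ _ h)

lemma canonical_iff {w : List (Fin n)} :
    Canonical w ↔ ∀ x i y, w = x ++ i :: y → ¬ Absorbed x i y := by
  constructor
  · rintro hw x i y rfl (h | h)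
    · obtain ⟨p, β, rfl, hβ⟩ := absorbedLeft_iff.mp h
      obtain ⟨b, hb, hbi⟩ := (hw i β ⟨p, y, by simp⟩).2
      exact lt_asymm hbi (hβ b hb)
    · obtain ⟨β, s, rfl, hβ⟩ := absorbedRight_iff.mp h
      obtain ⟨b, hb, hib⟩ := (hw i β ⟨x, s, by simp⟩).1
      exact lt_asymm hib (hβ b hb)
  · rintro hw i u ⟨s, t, rfl⟩
    by_contra hu
    rcases not_and_or.mp hu with hu | hu <;> push Not at hu
    · exact hw s i (u ++ i :: t) (by simp) (Or.inr (absorbedRight_of_forall_le hu))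
    · exact hw (s ++ i :: u) i t (by simp) (Or.inl (absorbedLeft_of_forall_le hu))

lemma Canonical.infix {w l : List (Fin n)} (hw : Canonical w) (h : l <:+: w) : Canonical l :=
  fun i u hi => hw i u (hi.trans h)

lemma Canonical.eq_of_reflTransGen {c d : List (Fin n)} (hc : Canonical c)
    (h : ReflTransGen KisRed c d) : c = d :=
  h.cases_head.resolve_right fun ⟨_, ⟨x, i, y, hx, _, hxy⟩, _⟩ => canonical_iff.mp hc x i y hx hxy

lemma Canonical.isPrefix_of_absorbedLeft {u x y : List (Fin n)} {i : Fin n} (hu : Canonical u)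
    (h : u <+: x ++ i :: y) (hi : AbsorbedLeft x i) : u <+: x := by
  rcases le_or_gt u.length x.length with hl | hl
  · exact prefix_of_prefix_length_le h (prefix_append _ _) hl
  · obtain ⟨t, rfl⟩ :=
      prefix_of_prefix_length_le (l₁ := x ++ [i]) ⟨y, by simp⟩ h (by simpa using hl)
    exact absurd (Or.inl hi) (canonical_iff.mp hu x i t (by simp))

section NoAbsorbedRight

variable {α : Type*} [LinearOrder α]

def NoAbsorbedRight (w : List α) : Prop :=
  ∀ x i y, w = x ++ i :: y → ¬ AbsorbedRight i y

lemma NoAbsorbedRight.of_insert {u v : List α} {k : α} (hw : NoAbsorbedRight (u ++ k :: v))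
    (hk : ∀ x j m, u = x ++ j :: m → j < k → ∃ b ∈ m, j ≤ b) : NoAbsorbedRight (u ++ v) := by
  intro x j y h hj
  rcases append_cons_eq_append h.symm with ⟨m, rfl, rfl⟩ | ⟨m, rfl, rfl⟩
  · exact hw x j (m ++ k :: v) (by simp) (hj.insert (hk x j m rfl))
  · exact hw (u ++ k :: m) j y (by simp) hj

lemma NoAbsorbedRight.of_insert_of_forall_le {u v : List α} {z : α}
    (hw : NoAbsorbedRight (u ++ z :: v)) (hz : ∀ b, z ≤ b) : NoAbsorbedRight (u ++ v) :=
  hw.of_insert fun _ j _ _ hj => absurd hj (hz j).not_gt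

lemma NoAbsorbedRight.drop {x y : List α} {i : α} (hw : NoAbsorbedRight (x ++ i :: y))
    (hi : AbsorbedLeft x i) : NoAbsorbedRight (x ++ y) :=
  hw.of_insert fun _ _ _ h hj => (h ▸ hi).exists_le hj

end NoAbsorbedRight

lemma Canonical.noAbsorbedRight {w : List (Fin n)} (hw : Canonical w) : NoAbsorbedRight w :=
  fun x i y h hi => canonical_iff.mp hw x i y h (Or.inr hi)

theorem exists_canonical_prefix {u : List (Fin n)} (hu : Canonical u) (w : List (Fin n))
    (hw : NoAbsorbedRight w) (huw : u <+: w) :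
    ∃ d, ReflTransGen KisRed w d ∧ Canonical d ∧ u <+: d := by
  by_cases hc : Canonical w
  · exact ⟨w, .refl, hc, huw⟩
  obtain ⟨x, i, y, rfl, hxy⟩ : ∃ x i y, w = x ++ i :: y ∧ Absorbed x i y := by
    simpa [canonical_iff] using hc
  have hi : AbsorbedLeft x i := hxy.resolve_right (hw x i y rfl)
  obtain ⟨d, hd, hcd, hud⟩ := exists_canonical_prefix hu (x ++ y) (hw.drop hi)
    ((hu.isPrefix_of_absorbedLeft huw hi).trans (prefix_append _ _))
  exact ⟨d, .head ⟨x, i, y, rfl, rfl, hxy⟩ hd, hcd, hud⟩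
termination_by w.length
decreasing_by simp_all

/-- If `u ++ [0] ++ v` is canonical, then the canonical form of `u ++ v` admits `u`
as a prefix. -/
theorem stmt_7 {n : ℕ} (u v c : List (Fin n)) (z : Fin n) (hz : (z : ℕ) = 0)
    (hcan : Canonical (u ++ [z] ++ v)) (hc : Canonical c) (hcw : KisEquiv c (u ++ v)) :
    u <+: c := by
  have hu : Canonical u := hcan.infix ⟨[], [z] ++ v, by simp⟩
  have hw : NoAbsorbedRight (u ++ v) :=
    (Canonical.noAbsorbedRight (w := u ++ z :: v) (by simpa using hcan)).of_insert_of_forall_le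
      fun b => Fin.le_def.mpr (by omega)
  obtain ⟨d, hwd, hd, hud⟩ := exists_canonical_prefix hu (u ++ v) hw (prefix_append _ _)
  obtain ⟨e, hce, hde⟩ := equivalence_join_kisRed.trans hcw.join_kisRed ⟨d, hwd, .refl⟩
  rw [hc.eq_of_reflTransGen hce, ← hd.eq_of_reflTransGen hde]
  exact hud
end

section
/- Let u, v be words over Fin n and j, k letters with j < k. Suppose u ++ [j] ++ v is canonical and every letter occurring in u is ≥ k. If c is canonical and c ~ filter≥k v, then u ++ [j] ++ c is also canonical. -/
variable {n : ℕ}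

/-!
A straddling infix of `u ++ [j] ++ c` is `[i] ++ p ++ s ++ [i]` with `i :: p` a suffix of
`u ++ [j]` and `s ++ [i]` a prefix of `c`; it contains `j < i`, so what needs proof is a letter
above `i`. Without one, `i` would be *exposed* in `c`: it occurs with no larger letter before it.

Exposedness is not invariant under the congruence (`[j, i, j] ~ [i, j]`), but on words in which
two equal letters are always separated by a larger one it is detected by an invariant. Let each
letter `a` act on states `Fin n → Snap n` by storing at `a` a snapshot of the values at the
letters above `a`; the defining relations hold for this action, and `i` is exposed in such a word
`w` iff `act i` fixes `eval w`. Letters below `k ≤ i` leave the values at letters `≥ i` alone, so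
`i` would be exposed in `v` too, and the infix of `u ++ [j] ++ v` from the `i` in `u` to that `i`
in `v` would not be special.
-/

theorem List.exists_eq_append_cons_not_mem {α : Type*} {a : α} {l : List α} (h : a ∈ l) :
    ∃ s t, l = s ++ a :: t ∧ a ∉ s := by
  induction l with
  | nil => cases h
  | cons b l ih =>
    by_cases hb : b = a
    · exact ⟨[], l, by simp [hb], List.not_mem_nil⟩
    · obtain ⟨s, t, rfl, hs⟩ := ih ((List.mem_cons.mp h).resolve_left (Ne.symm hb))
      exact ⟨b :: s, t, rfl, by simp [hs, Ne.symm hb]⟩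

theorem List.mem_of_cons_suffix_append_singleton {α : Type*} {a b : α} {p l : List α}
    (h : a :: p <:+ l ++ [b]) (hab : a ≠ b) : b ∈ p := by
  have hlast := h.getLast (List.cons_ne_nil a p)
  rw [List.getLast_append_singleton] at hlast
  rcases eq_or_ne p [] with rfl | hp
  · exact absurd hlast hab
  · rw [List.getLast_cons hp] at hlast
    exact hlast ▸ List.getLast_mem hp

namespace Kiselman

inductive Snap (n : ℕ) : Type
  | leaf : Snap n
  | node : (Fin n → Snap n) → Snap n

def above (a : Fin n) (s : Fin n → Snap n) : Fin n → Snap n :=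
  fun b => if a < b then s b else .leaf

def act (a : Fin n) (s : Fin n → Snap n) : Fin n → Snap n :=
  Function.update s a (.node (above a s))

def run (w : List (Fin n)) (s : Fin n → Snap n) : Fin n → Snap n :=
  w.foldr act s

def eval (w : List (Fin n)) : Fin n → Snap n :=
  run w fun _ => .leaf

section Action

variable {a b c : Fin n} {s t : Fin n → Snap n}

theorem above_congr (h : ∀ b, a < b → s b = t b) : above a s = above a t := by
  funext b
  by_cases hb : a < b
  · simp only [above, if_pos hb, h b hb]
  · simp only [above, if_neg hb]

theorem apply_eq_of_above_eq (h : above a s = above a t) (hb : a < b) : s b = t b := by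
  simpa [above, hb] using congrFun h b

theorem act_self (a : Fin n) (s : Fin n → Snap n) : act a s a = .node (above a s) :=
  Function.update_self ..

theorem act_of_ne (h : b ≠ a) (s : Fin n → Snap n) : act a s b = s b :=
  Function.update_of_ne h ..

theorem act_eq_self_iff : act a s = s ↔ s a = .node (above a s) :=
  Function.update_eq_self_iff.trans eq_comm

theorem act_eq_self_congr (h : ∀ b, a ≤ b → s b = t b) : act a s = s ↔ act a t = t := by
  rw [act_eq_self_iff, act_eq_self_iff, h a le_rfl, above_congr fun b hb => h b hb.le]

theorem above_act_of_le (h : a ≤ c) (s : Fin n → Snap n) : above c (act a s) = above c s :=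
  above_congr fun _ hb => act_of_ne (h.trans_lt hb).ne' s

theorem act_act (a : Fin n) (s : Fin n → Snap n) : act a (act a s) = act a s := by
  rw [act_eq_self_iff, act_self, above_act_of_le le_rfl]

theorem act_act_eq_self_of_le (h : a ≤ c) (hs : act c s = s) : act c (act a s) = act a s := by
  rw [act_eq_self_iff, above_act_of_le h]
  rcases h.eq_or_lt with rfl | hlt
  · exact act_self a s
  · rw [act_of_ne hlt.ne', ← act_eq_self_iff.mp hs]

theorem act_congr (h : ∀ b, b ≠ a → s b = t b) : act a s = act a t := by
  funext b
  rcases eq_or_ne b a with rfl | hb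
  · rw [act_self, act_self, above_congr fun b' hb' => h b' hb'.ne']
  · rw [act_of_ne hb, act_of_ne hb, h b hb]

theorem act_act_act_of_lt (h : a < c) (s : Fin n → Snap n) :
    act a (act c (act a s)) = act a (act c s) := by
  refine act_congr fun b hb => ?_
  rcases eq_or_ne b c with rfl | hbc
  · rw [act_self, act_self, above_act_of_le h.le]
  · rw [act_of_ne hbc, act_of_ne hbc, act_of_ne hb]

theorem run_append (x y : List (Fin n)) (s : Fin n → Snap n) :
    run (x ++ y) s = run x (run y s) :=
  List.foldr_append ..

theorem run_cons (a : Fin n) (w : List (Fin n)) (s : Fin n → Snap n) :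
    run (a :: w) s = act a (run w s) :=
  rfl

theorem run_apply_of_not_mem {w : List (Fin n)} (h : a ∉ w) (s : Fin n → Snap n) :
    run w s a = s a := by
  induction w with
  | nil => rfl
  | cons b w ih =>
    rw [List.mem_cons, not_or] at h
    rw [run_cons, act_of_ne h.1, ih h.2]

theorem run_eq_of_kisStep {x y : List (Fin n)} (h : KisStep x y) (s : Fin n → Snap n) :
    run x s = run y s := by
  cases h with
  | idem u v i => simp only [run_append]; exact congrArg (run u) (act_act i _)
  | left u v i j hij => simp only [run_append]; exact congrArg (run u) (act_act_act_of_lt hij _)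
  | right u v i j hij =>
    simp only [run_append]
    exact congrArg (run u) (act_act_eq_self_of_le hij.le (act_act j _))

theorem run_filterGE_apply (k : Fin n) (v : List (Fin n)) (s : Fin n → Snap n) :
    ∀ b, k ≤ b → run (filterGE k v) s b = run v s b := by
  induction v with
  | nil => exact fun _ _ => rfl
  | cons a v ih =>
    intro b hb
    by_cases ha : k ≤ a
    · have hfilter : filterGE k (a :: v) = a :: filterGE k v := by simp [filterGE, ha]
      rw [hfilter, run_cons, run_cons]
      rcases eq_or_ne b a with rfl | hba
      · rw [act_self, act_self, above_congr fun b' hb' => ih b' (hb.trans hb'.le)]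
      · rw [act_of_ne hba, act_of_ne hba, ih b hb]
    · have hfilter : filterGE k (a :: v) = filterGE k v := by simp [filterGE, ha]
      rw [hfilter, run_cons, act_of_ne ((not_le.mp ha).trans_le hb).ne', ih b hb]

theorem act_eval_filterGE_eq_self_iff {i k : Fin n} {v : List (Fin n)} (hki : k ≤ i) :
    act i (eval (filterGE k v)) = eval (filterGE k v) ↔ act i (eval v) = eval v :=
  act_eq_self_congr fun b hb => run_filterGE_apply k v _ b (hki.trans hb)

end Action

theorem _root_.KisEquiv.eq_of_kisStep {α : Sort*} {f : List (Fin n) → α}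
    (hf : ∀ x y, KisStep x y → f x = f y) {x y : List (Fin n)} (h : KisEquiv x y) : f x = f y :=
  congrArg (Quot.lift f hf) (Quot.eqvGen_sound h)

theorem _root_.KisEquiv.mem_iff {x y : List (Fin n)} (h : KisEquiv x y) {a : Fin n} :
    a ∈ x ↔ a ∈ y :=
  (h.eq_of_kisStep (f := (a ∈ ·)) fun _ _ hxy => propext <| by
    cases hxy <;> simp only [List.mem_append, List.mem_cons, List.not_mem_nil] <;> tauto).to_iff

theorem _root_.KisEquiv.eval_eq {x y : List (Fin n)} (h : KisEquiv x y) : eval x = eval y :=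
  h.eq_of_kisStep fun _ _ hxy => run_eq_of_kisStep hxy _

def Exposed (c : Fin n) (w : List (Fin n)) : Prop :=
  ∃ q r, w = q ++ c :: r ∧ ∀ z ∈ q, z ≤ c

def UpperCanonical (w : List (Fin n)) : Prop :=
  ∀ (i : Fin n) (u : List (Fin n)), [i] ++ u ++ [i] <:+: w → ∃ j ∈ u, i < j

theorem UpperCanonical.of_infix {w x : List (Fin n)} (hw : UpperCanonical w) (hx : x <:+: w) :
    UpperCanonical x :=
  fun i u h => hw i u (h.trans hx)

theorem _root_.Canonical.of_infix {w x : List (Fin n)} (hw : Canonical w) (hx : x <:+: w) :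
    Canonical x :=
  fun i u h => hw i u (h.trans hx)

theorem _root_.Canonical.upperCanonical {w : List (Fin n)} (hw : Canonical w) : UpperCanonical w :=
  fun i u h => (hw i u h).1

theorem act_run_eq_self_of_forall_le {c : Fin n} {q : List (Fin n)} {s : Fin n → Snap n}
    (hq : ∀ z ∈ q, z ≤ c) (hs : act c s = s) : act c (run q s) = run q s := by
  induction q with
  | nil => exact hs
  | cons a q ih =>
    simp only [List.mem_cons, forall_eq_or_imp] at hq
    exact act_act_eq_self_of_le hq.1 (ih hq.2)

theorem Exposed.act_run_eq_self {c : Fin n} {w : List (Fin n)} (h : Exposed c w)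
    (s : Fin n → Snap n) : act c (run w s) = run w s := by
  obtain ⟨q, r, rfl, hq⟩ := h
  rw [run_append, run_cons]
  exact act_run_eq_self_of_forall_le hq (act_act c _)

theorem run_apply_eq_of_act_eq_self {c b : Fin n} {q : List (Fin n)} {s : Fin n → Snap n}
    (hcq : c ∉ q) (hfix : act c (run q (act c s)) = run q (act c s)) (hb : c < b) :
    run q (act c s) b = s b := by
  rw [act_eq_self_iff, run_apply_of_not_mem hcq, act_self] at hfix
  exact (apply_eq_of_above_eq (Snap.node.inj hfix) hb).symm

theorem exposed_of_act_eval_eq_self {c : Fin n} {w : List (Fin n)} (hw : UpperCanonical w)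
    (hfix : act c (eval w) = eval w) : Exposed c w := by
  induction c using WellFoundedGT.induction generalizing w with
  | _ c ih =>
  by_contra hne
  have hcw : c ∈ w := by
    by_contra hcw
    rw [act_eq_self_iff, eval, run_apply_of_not_mem hcw] at hfix
    cases hfix
  obtain ⟨q, r, rfl, hcq⟩ := List.exists_eq_append_cons_not_mem hcw
  rw [eval, run_append, run_cons] at hfix
  have hagree : ∀ b, c < b → eval (q ++ c :: r) b = eval r b := fun b hb => by
    rw [eval, run_append, run_cons]
    exact run_apply_eq_of_act_eq_self hcq hfix hb
  obtain ⟨z, hzq, hcz⟩ : ∃ z ∈ q, c < z := by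
    by_contra! h
    exact hne ⟨q, r, rfl, h⟩
  -- The largest letter `c'` of `q` is exposed in `w`, hence (by induction) in `r`; the infix
  -- of `w` between these two occurrences of `c'` then has no letter above `c'`.
  obtain ⟨c', hc'q, hmax⟩ := q.toFinset.exists_max_image id ⟨z, List.mem_toFinset.mpr hzq⟩
  simp only [List.mem_toFinset, id] at hc'q hmax
  have hcc' : c < c' := hcz.trans_le (hmax z hzq)
  obtain ⟨q₁, q₂, rfl⟩ := List.append_of_mem hc'q
  have hfix' : act c' (eval r) = eval r :=
    (act_eq_self_congr fun b hb => hagree b (hcc'.trans_le hb)).mp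
      (Exposed.act_run_eq_self ⟨q₁, q₂ ++ c :: r, by simp, fun z hz => hmax z (by simp [hz])⟩ _)
  obtain ⟨r₁, r₂, rfl, hr₁⟩ :=
    ih c' hcc' (w := r) (hw.of_infix ⟨q₁ ++ c' :: q₂ ++ [c], [], by simp⟩) hfix'
  obtain ⟨y, hy, hc'y⟩ := hw c' (q₂ ++ c :: r₁) ⟨q₁, r₂, by simp⟩
  simp only [List.mem_append, List.mem_cons] at hy
  rcases hy with hy | rfl | hy
  · exact not_lt_of_ge (hmax y (by simp [hy])) hc'y
  · exact lt_asymm hcc' hc'y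
  · exact not_lt_of_ge (hr₁ y hy) hc'y

theorem _root_.Canonical.append {x y : List (Fin n)} (hx : Canonical x) (hy : Canonical y)
    (h : ∀ i p s, i :: p <:+ x → s ++ [i] <+: y → Special i (p ++ s)) : Canonical (x ++ y) := by
  intro i w hw
  rcases List.infix_append_iff.mp hw with hw | hw | ⟨l₁, l₂, hl, hl₁, hl₂⟩
  · exact hx i w hw
  · exact hy i w hw
  rcases l₁ with _ | ⟨a, p⟩
  · rw [List.nil_append] at hl
    exact hy i w (hl ▸ hl₂.isInfix)
  rcases List.eq_nil_or_concat' l₂ with rfl | ⟨s, b, rfl⟩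
  · rw [List.append_nil] at hl
    exact hx i w (hl ▸ hl₁.isInfix)
  simp only [List.cons_append, List.cons.injEq, ← List.append_assoc] at hl
  obtain ⟨rfl, hl⟩ := hl
  obtain ⟨rfl, hib⟩ := List.append_inj' hl rfl
  cases List.singleton_inj.mp hib
  exact h i p s hl₁ hl₂

end Kiselman

open Kiselman

theorem stmt_8_general {n : ℕ} (u v c : List (Fin n)) (j k : Fin n) (hjk : j < k)
    (hcan : Canonical (u ++ [j] ++ v))
    (hc : Canonical c) (hcv : KisEquiv c (filterGE k v)) :
    Canonical (u ++ [j] ++ c) := by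
  refine (hcan.of_infix (List.prefix_append _ _).isInfix).append hc fun i p s hp hs => ?_
  obtain ⟨c', rfl⟩ := hs
  have hki : k ≤ i := by
    have hi : i ∈ filterGE k v := hcv.mem_iff.mp (by simp)
    simpa [filterGE] using (List.mem_filter.mp hi).2
  refine ⟨?_, j, ?_, hjk.trans_le hki⟩
  · by_contra! hle
    have hexp : Exposed i (s ++ [i] ++ c') := ⟨s, c', by simp, fun z hz => hle z (by simp [hz])⟩
    have hvuc : UpperCanonical v :=
      (hcan.of_infix (List.suffix_append _ _).isInfix).upperCanonical
    obtain ⟨q, r, rfl, hq⟩ := exposed_of_act_eval_eq_self hvuc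
      ((act_eval_filterGE_eq_self_iff hki).mp (hcv.eval_eq ▸ hexp.act_run_eq_self _))
    obtain ⟨t, ht⟩ := hp
    obtain ⟨m, hm, him⟩ := (hcan i (p ++ q) ⟨t, r, by simp [← ht]⟩).1
    rcases List.mem_append.mp hm with hm | hm
    · exact not_lt_of_ge (hle m (by simp [hm])) him
    · exact not_lt_of_ge (hq m hm) him
  · exact List.mem_append_left _
      (List.mem_of_cons_suffix_append_singleton hp (hjk.trans_le hki).ne')

/-- If `u ++ [j] ++ v` is canonical, all letters of `u` are `≥ k`, and `j < k`, then
`u ++ [j] ++ Can (filterGE k v)` is also canonical. -/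
theorem stmt_8 {n : ℕ} (u v c : List (Fin n)) (j k : Fin n) (hjk : j < k)
    (hcan : Canonical (u ++ [j] ++ v)) (hu : ∀ a ∈ u, k ≤ a)
    (hc : Canonical c) (hcv : KisEquiv c (filterGE k v)) :
    Canonical (u ++ [j] ++ c) :=
  stmt_8_general u v c j k hjk hcan hc hcv
end

section
/- Let u, v, v' be words over Fin n all of whose letters are ≥ 2. If u ++ [0] ++ v ++ [1] ++ v' is canonical, and c is canonical with c ~ v ++ v', then u ++ [0] ++ c is canonical. -/
variable {n : ℕ}

/-!
Every letter `i` of `c` is `> 0`, so an infix `[i] ++ w ++ [i]` of `u ++ [0] ++ c` that straddles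
the junction contains `0`; what must be shown is that `w` contains a letter `> i`. If it does not,
then `i` is the first letter `≥ i` of `c` (`FirstGE`). That property is not invariant under `~`,
but it is detected by an invariant: the heights `bumpWord w 0`, where `bump c` resets the height of
`c` to one more than the sum of the heights of the letters above `c`, satisfy the Kiselman
relations, and on words in which two occurrences of a letter are always separated by a larger
letter, `i` is the first letter `≥ i` exactly when its height is fresh (`IsFresh`). Deleting the
`1` from `u ++ [0] ++ v ++ [1] ++ v'` keeps this separation property, since `1` is below every
letter of `v'`. Hence `i` is also the first letter `≥ i` of `v ++ v'`, and `u ++ [0] ++ v ++ v'`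
has an infix `[i] ++ w' ++ [i]` with no letter `> i` in `w'`.
-/

theorem List.bracket_infix_append {α : Type*} {m : α} {mid x y : List α}
    (h : [m] ++ mid ++ [m] <:+: x ++ y) :
    [m] ++ mid ++ [m] <:+: x ∨ [m] ++ mid ++ [m] <:+: y ∨
      ∃ x₀ x₁ y₁ y₂, x = x₀ ++ m :: x₁ ∧ y = y₁ ++ m :: y₂ ∧ mid = x₁ ++ y₁ := by
  rcases List.infix_append_iff_ne_nil.1 h with h | h | ⟨l₁, l₂, hl₁, hl₂, hl, ⟨x₀, hx⟩, ⟨y₂, hy⟩⟩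
  · exact .inl h
  · exact .inr (.inl h)
  obtain ⟨a, x₁, rfl⟩ := List.exists_cons_of_ne_nil hl₁
  obtain ⟨y₁, b, rfl⟩ := (List.eq_nil_or_concat l₂).resolve_left hl₂
  simp only [List.concat_eq_append, List.cons_append, List.cons.injEq, ← List.append_assoc,
    List.append_singleton_inj] at hl
  obtain ⟨rfl, rfl, rfl⟩ := hl
  exact .inr (.inr ⟨x₀, x₁, y₁, y₂, hx.symm, by simp [← hy], rfl⟩)

section Special

variable {α : Type*} [LinearOrder α]

def UpSpecial (w : List α) : Prop :=
  ∀ i u, [i] ++ u ++ [i] <:+: w → ∃ j ∈ u, i < j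

def DownSpecial (w : List α) : Prop :=
  ∀ i u, [i] ++ u ++ [i] <:+: w → ∃ j ∈ u, j < i

def FirstGE (a : α) (w : List α) : Prop :=
  ∃ p q, w = p ++ a :: q ∧ ∀ x ∈ p, x < a

theorem UpSpecial.infix {w l : List α} (hw : UpSpecial w) (hl : l <:+: w) : UpSpecial l :=
  fun i u h => hw i u (h.trans hl)

theorem DownSpecial.infix {w l : List α} (hw : DownSpecial w) (hl : l <:+: w) :
    DownSpecial l :=
  fun i u h => hw i u (h.trans hl)

theorem UpSpecial.of_append_singleton_append {x y : List α} {o : α} (h : UpSpecial (x ++ [o] ++ y))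
    (hy : ∀ a ∈ y, o ≤ a) : UpSpecial (x ++ y) := by
  intro i u hu
  rcases List.bracket_infix_append hu with hx | hy' | ⟨x₀, x₁, y₁, y₂, rfl, rfl, rfl⟩
  · exact h i u (hx.trans ⟨[], [o] ++ y, by simp⟩)
  · exact h i u (hy'.trans List.infix_append_right)
  · obtain ⟨j, hj, hij⟩ := h i (x₁ ++ o :: y₁) ⟨x₀, y₂, by simp⟩
    have hoi : o ≤ i := hy i (by simp)
    simp only [List.mem_append, List.mem_cons] at hj
    rcases hj with hj | rfl | hj
    · exact ⟨j, by simp [hj], hij⟩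
    · exact absurd hij (not_lt_of_ge hoi)
    · exact ⟨j, by simp [hj], hij⟩

theorem DownSpecial.append_singleton_append {x c : List α} {z : α} (hx : DownSpecial (x ++ [z]))
    (hc : DownSpecial c) (hzc : ∀ a ∈ c, z < a) : DownSpecial (x ++ [z] ++ c) := by
  intro i u hu
  rcases List.bracket_infix_append hu with h | h | ⟨x₀, x₁, c₁, c₂, hx₀, rfl, rfl⟩
  · exact hx i u h
  · exact hc i u h
  · have hzi : z < i := hzc i (by simp)
    obtain ⟨x₁', e, rfl⟩ := (List.eq_nil_or_concat x₁).resolve_left <| by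
      rintro rfl
      simp only [List.append_singleton_inj] at hx₀
      exact hzi.ne hx₀.2
    rw [List.concat_eq_append, ← List.cons_append, ← List.append_assoc,
      List.append_singleton_inj] at hx₀
    exact ⟨z, by simp [hx₀.2], hzi⟩

theorem UpSpecial.firstGE {c c₁ c₂ : List α} {a : α} (hc : UpSpecial c)
    (hsplit : c = c₁ ++ a :: c₂) (hle : ∀ x ∈ c₁, x ≤ a) : FirstGE a c := by
  refine ⟨c₁, c₂, hsplit, fun x hx => (hle x hx).lt_of_ne ?_⟩
  rintro rfl
  obtain ⟨s, t, rfl⟩ := List.append_of_mem hx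
  obtain ⟨j, hj, hxj⟩ := hc x t ⟨s, c₂, by simp [hsplit]⟩
  exact (hle j (by simp [hj])).not_gt hxj

end Special

section Bump

variable {α : Type*} [LinearOrder α] [LocallyFiniteOrderTop α]

open Function

def sumAbove (a : α) (s : α → ℕ) : ℕ := ∑ j ∈ Finset.Ioi a, s j

def bump (c : α) (s : α → ℕ) : α → ℕ := update s c (1 + sumAbove c s)

def bumpWord (w : List α) (s : α → ℕ) : α → ℕ := w.foldr bump s

def IsFresh (a : α) (s : α → ℕ) : Prop := s a = 1 + sumAbove a s

def Admissible (s : α → ℕ) : Prop := ∀ a, s a ≤ 1 + sumAbove a s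

theorem sumAbove_update_of_not_lt {a c : α} (h : ¬ a < c) (s : α → ℕ) (v : ℕ) :
    sumAbove a (update s c v) = sumAbove a s :=
  Finset.sum_congr rfl fun j hj =>
    update_of_ne (by rintro rfl; exact h (Finset.mem_Ioi.1 hj)) _ _

theorem sumAbove_update_of_lt {a c : α} (h : a < c) (s : α → ℕ) (v : ℕ) :
    sumAbove a (update s c v) + s c = sumAbove a s + v := by
  have hc : c ∈ Finset.Ioi a := Finset.mem_Ioi.2 h
  rw [sumAbove, sumAbove, Finset.sum_update_of_mem hc, ← Finset.add_sum_erase _ s hc,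
    Finset.erase_eq]
  ring

theorem bump_apply_self (c : α) (s : α → ℕ) : bump c s c = 1 + sumAbove c s :=
  update_self _ _ _

theorem bump_apply_of_ne {a c : α} (h : a ≠ c) (s : α → ℕ) : bump c s a = s a :=
  update_of_ne h _ _

theorem bump_update_self (c : α) (s : α → ℕ) (v : ℕ) : bump c (update s c v) = bump c s := by
  rw [bump, bump, sumAbove_update_of_not_lt (lt_irrefl c), update_idem]

theorem bump_update_of_lt {c d : α} (h : c < d) (s : α → ℕ) (v : ℕ) :
    bump d (update s c v) = update (bump d s) c v := by
  rw [bump, bump, sumAbove_update_of_not_lt h.not_gt, update_comm h.ne]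

theorem bump_bump_self (c : α) (s : α → ℕ) : bump c (bump c s) = bump c s :=
  bump_update_self c s _

theorem bump_bump_bump_of_lt_left {i j : α} (h : i < j) (s : α → ℕ) :
    bump i (bump j (bump i s)) = bump i (bump j s) := by
  show bump i (bump j (update s i _)) = _
  rw [bump_update_of_lt h, bump_update_self]

theorem bump_bump_bump_of_lt_right {i j : α} (h : i < j) (s : α → ℕ) :
    bump j (bump i (bump j s)) = bump i (bump j s) := by
  have hj : bump i (bump j s) j = 1 + sumAbove j (bump i (bump j s)) := by
    rw [bump_apply_of_ne h.ne', bump_apply_self, bump, sumAbove_update_of_not_lt h.not_gt, bump,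
      sumAbove_update_of_not_lt (lt_irrefl j)]
  rw [bump, ← hj, update_eq_self]

theorem admissible_zero : Admissible (0 : α → ℕ) := fun _ => Nat.zero_le _

theorem Admissible.bump {s : α → ℕ} (hs : Admissible s) (c : α) : Admissible (bump c s) := by
  intro a
  rcases eq_or_ne a c with rfl | hac
  · rw [bump_apply_self, _root_.bump, sumAbove_update_of_not_lt (lt_irrefl a)]
  rw [bump_apply_of_ne hac]
  by_cases h : a < c
  · have := sumAbove_update_of_lt h s (1 + sumAbove c s)
    have := hs a
    have := hs c
    rw [_root_.bump]
    omega
  · rw [_root_.bump, sumAbove_update_of_not_lt h]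
    exact hs a

theorem Admissible.bumpWord {s : α → ℕ} (hs : Admissible s) (w : List α) :
    Admissible (bumpWord w s) := by
  induction w with
  | nil => exact hs
  | cons c w ih => exact ih.bump c

theorem IsFresh.of_bump {s : α → ℕ} {a e : α} (hs : Admissible s) (hea : e ≠ a)
    (h : IsFresh a (bump e s)) : IsFresh a s ∧ (a < e → IsFresh e s) := by
  unfold IsFresh at h ⊢
  rw [bump_apply_of_ne hea.symm] at h
  by_cases hae : a < e
  · have := sumAbove_update_of_lt hae s (1 + sumAbove e s)
    have := hs a
    have := hs e
    rw [bump] at h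
    omega
  · rw [bump, sumAbove_update_of_not_lt hae] at h
    exact ⟨h, fun h' => absurd h' hae⟩

theorem IsFresh.bump_of_lt {s : α → ℕ} {a x : α} (h : IsFresh a s) (hxa : x < a) :
    IsFresh a (bump x s) := by
  rw [IsFresh, bump_apply_of_ne hxa.ne', bump, sumAbove_update_of_not_lt hxa.not_gt]
  exact h

theorem FirstGE.isFresh {w : List α} {a : α} (h : FirstGE a w) (s : α → ℕ) :
    IsFresh a (bumpWord w s) := by
  obtain ⟨p, q, rfl, hp⟩ := h
  induction p with
  | nil =>
    rw [IsFresh, List.nil_append, bumpWord, List.foldr_cons, bump_apply_self, bump,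
      sumAbove_update_of_not_lt (lt_irrefl a)]
  | cons x p ih =>
    exact (ih fun y hy => hp y (List.mem_cons_of_mem x hy)).bump_of_lt (hp x List.mem_cons_self)

theorem UpSpecial.firstGE_of_isFresh {w : List α} (hw : UpSpecial w) {a : α}
    (h : IsFresh a (bumpWord w 0)) : FirstGE a w := by
  induction w generalizing a with
  | nil => simp [IsFresh, bumpWord] at h; omega
  | cons e t ih =>
    rcases eq_or_ne e a with rfl | hea
    · exact ⟨[], t, rfl, by simp⟩
    have ht : UpSpecial t := hw.infix (List.suffix_cons e t).isInfix
    obtain ⟨hfresh, hfresh_e⟩ := h.of_bump (admissible_zero.bumpWord t) hea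
    obtain ⟨p, q, rfl, hp⟩ := ih ht hfresh
    refine ⟨e :: p, q, rfl, List.forall_mem_cons.2 ⟨hea.lt_of_le (not_lt.1 fun hae => ?_), hp⟩⟩
    obtain ⟨p', q', hsplit, hp'⟩ := ih ht (hfresh_e hae)
    obtain ⟨j, hj, hej⟩ := hw e p' ⟨[], q', by simp [hsplit]⟩
    exact (hp' j hj).not_gt hej

end Bump

theorem KisEquiv.eq_of_kisStep_s9 {β : Type*} {f : List (Fin n) → β}
    (hf : ∀ x y, KisStep x y → f x = f y) {x y : List (Fin n)} (h : KisEquiv x y) :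
    f x = f y := by
  induction h with
  | rel x y hxy => exact hf x y hxy
  | refl => rfl
  | symm _ _ _ ih => exact ih.symm
  | trans _ _ _ _ _ ih₁ ih₂ => exact ih₁.trans ih₂

theorem KisEquiv.mem_iff_s9 {x y : List (Fin n)} (h : KisEquiv x y) (a : Fin n) :
    a ∈ x ↔ a ∈ y :=
  Iff.of_eq <| h.eq_of_kisStep_s9 (f := (a ∈ ·)) fun _ _ hxy => by
    cases hxy <;> grind

theorem KisEquiv.bumpWord_eq {x y : List (Fin n)} (h : KisEquiv x y) (s : Fin n → ℕ) :
    bumpWord x s = bumpWord y s :=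
  h.eq_of_kisStep_s9 (f := (bumpWord · s)) fun _ _ hxy => by
    cases hxy with
    | idem u v i => simp [bumpWord, bump_bump_self]
    | left u v i j hij => simp [bumpWord, bump_bump_bump_of_lt_left hij]
    | right u v i j hij => simp [bumpWord, bump_bump_bump_of_lt_right hij]

theorem UpSpecial.append_of_kisEquiv {x y c : List (Fin n)} (hxy : UpSpecial (x ++ y))
    (hc : UpSpecial c) (hcy : KisEquiv c y) : UpSpecial (x ++ c) := by
  intro i u hu
  rcases List.bracket_infix_append hu with h | h | ⟨x₀, x₁, c₁, c₂, rfl, rfl, rfl⟩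
  · exact hxy i _ (h.trans List.infix_append_left)
  · exact hc i u h
  by_contra! hle
  have hy : UpSpecial y := hxy.infix List.infix_append_right
  obtain ⟨p, q, rfl, hp⟩ := hy.firstGE_of_isFresh <| by
    rw [← hcy.bumpWord_eq]
    exact (hc.firstGE rfl fun j hj => hle j (by simp [hj])).isFresh 0
  obtain ⟨j, hj, hij⟩ := hxy i (x₁ ++ p) ⟨x₀, q, by simp⟩
  rcases List.mem_append.1 hj with hj | hj
  · exact (hle j (by simp [hj])).not_gt hij
  · exact (hp j hj).not_gt hij

theorem canonical_iff_s9 {w : List (Fin n)} : Canonical w ↔ UpSpecial w ∧ DownSpecial w :=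
  ⟨fun h => ⟨fun i u hu => (h i u hu).1, fun i u hu => (h i u hu).2⟩,
    fun h i u hu => ⟨h.1 i u hu, h.2 i u hu⟩⟩

theorem stmt_9_general {n : ℕ} (u v v' c : List (Fin n)) (z o : Fin n)
    (hz : (z : ℕ) = 0) (ho : (o : ℕ) = 1)
    (hv : ∀ a ∈ v, 2 ≤ (a : ℕ)) (hv' : ∀ a ∈ v', 2 ≤ (a : ℕ))
    (hcan : Canonical (u ++ [z] ++ v ++ [o] ++ v'))
    (hc : Canonical c) (hcv : KisEquiv c (v ++ v')) :
    Canonical (u ++ [z] ++ c) := by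
  rw [canonical_iff_s9] at hcan hc ⊢
  have hzc : ∀ a ∈ c, z < a := by
    intro a ha
    rcases List.mem_append.1 ((hcv.mem_iff_s9 a).1 ha) with h | h
    · exact Fin.lt_def.2 (by have := hv a h; omega)
    · exact Fin.lt_def.2 (by have := hv' a h; omega)
  have hup : UpSpecial (u ++ [z] ++ (v ++ v')) := by
    simpa using hcan.1.of_append_singleton_append fun a ha =>
      Fin.le_def.2 (by have := hv' a ha; omega)
  have hdown : DownSpecial (u ++ [z]) := hcan.2.infix ⟨[], v ++ [o] ++ v', by simp⟩
  exact ⟨hup.append_of_kisEquiv hc.1 hcv, hdown.append_singleton_append hc.2 hzc⟩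

/-- If `u ++ [0] ++ v ++ [1] ++ v'` is canonical with `u, v, v'` having all letters
`≥ 2`, then `u ++ [0] ++ Can (v ++ v')` is canonical. -/
theorem stmt_9 {n : ℕ} (u v v' c : List (Fin n)) (z o : Fin n)
    (hz : (z : ℕ) = 0) (ho : (o : ℕ) = 1)
    (hu : ∀ a ∈ u, 2 ≤ (a : ℕ)) (hv : ∀ a ∈ v, 2 ≤ (a : ℕ)) (hv' : ∀ a ∈ v', 2 ≤ (a : ℕ))
    (hcan : Canonical (u ++ [z] ++ v ++ [o] ++ v'))
    (hc : Canonical c) (hcv : KisEquiv c (v ++ v')) :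
    Canonical (u ++ [z] ++ c) :=
  stmt_9_general u v v' c z o hz ho hv hv' hcan hc hcv
end

section
/- Let w be a word over Fin n and k a letter. If c is canonical with c ~ w and d is canonical with d ~ filter≥k w, then d is a sublist (quasi-subword) of c. (In the paper's notation: Can_{{k,…,n}} w is a quasi-subword of Can w.) -/
variable {n : ℕ}

/-!
Orient the Kiselman relations as deletions: an occurrence of a letter `i` may be deleted when an
earlier `i` is separated from it only by larger letters, or a later `i` only by smaller letters.
Every generating relation is such a deletion, and a canonical word admits none. Two different
deletions in the same word can each be completed by one further deletion to a common word, so by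
Church–Rosser any two equivalent words reduce to a common word; a canonical word, being
irreducible, is therefore a sublist of every word equivalent to it. Since `filterGE k` respects
the congruence, the canonical form of `filterGE k w` is a sublist of `filterGE k c`, hence of `c`.
-/

open Relation

theorem List.append_cons_eq_append_cons_trichotomy {α : Type*} {s t s' t' : List α} {a b : α}
    (h : s ++ a :: t = s' ++ b :: t') :
    (∃ r, s' = s ++ a :: r ∧ t = r ++ b :: t') ∨ (s = s' ∧ a = b ∧ t = t') ∨
      (∃ r, s = s' ++ b :: r ∧ t' = r ++ a :: t) := by
  rcases List.append_eq_append_iff.1 h with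
    ⟨_ | ⟨c, r⟩, rfl, h'⟩ | ⟨_ | ⟨c, r⟩, rfl, h'⟩ <;> simp_all

section Deletion

variable {α : Type*} [LinearOrder α] {i j x : α} {u v w : List α}

def LeftWitness (i : α) (u : List α) : Prop :=
  ∃ s t, u = s ++ i :: t ∧ ∀ x ∈ t, i < x

def RightWitness (i : α) (u : List α) : Prop :=
  ∃ t s, u = t ++ i :: s ∧ ∀ x ∈ t, x < i

def Redundant (u : List α) (i : α) (v : List α) : Prop :=
  LeftWitness i u ∨ RightWitness i v

def Deletion (u v : List α) : Prop :=
  ∃ s i t, u = s ++ i :: t ∧ v = s ++ t ∧ Redundant s i t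

theorem LeftWitness.append (h : LeftWitness i u) (hv : ∀ x ∈ v, i < x) :
    LeftWitness i (u ++ v) := by
  obtain ⟨s, t, rfl, ht⟩ := h
  exact ⟨s, t ++ v, by simp, by grind⟩

theorem RightWitness.append_left (h : RightWitness i v) (hu : ∀ x ∈ u, x < i) :
    RightWitness i (u ++ v) := by
  obtain ⟨t, s, rfl, ht⟩ := h
  exact ⟨u ++ t, s, by simp, by grind⟩

theorem LeftWitness.of_append_cons (h : LeftWitness i (u ++ j :: v)) :
    LeftWitness i (u ++ v) ∨ (j = i ∧ ∀ x ∈ v, i < x) := by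
  obtain ⟨s, t, heq, ht⟩ := h
  rcases List.append_cons_eq_append_cons_trichotomy heq with
    ⟨r, rfl, rfl⟩ | ⟨rfl, rfl, rfl⟩ | ⟨r, rfl, rfl⟩
  · exact .inl ⟨u ++ r, t, by simp, ht⟩
  · exact .inr ⟨rfl, ht⟩
  · exact .inl ⟨s, r ++ v, by simp, by grind⟩

theorem RightWitness.of_append_cons (h : RightWitness i (u ++ j :: v)) :
    RightWitness i (u ++ v) ∨ (j = i ∧ ∀ x ∈ u, x < i) := by
  obtain ⟨t, s, heq, ht⟩ := h
  rcases List.append_cons_eq_append_cons_trichotomy heq with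
    ⟨r, rfl, rfl⟩ | ⟨rfl, rfl, rfl⟩ | ⟨r, rfl, rfl⟩
  · exact .inl ⟨u ++ r, s, by simp, by grind⟩
  · exact .inr ⟨rfl, ht⟩
  · exact .inl ⟨t, r ++ v, by simp, ht⟩

theorem LeftWitness.le_of_append_singleton (h : LeftWitness i (u ++ [x])) : i ≤ x := by
  obtain ⟨s, t, heq, ht⟩ := h
  rcases t.eq_nil_or_concat with rfl | ⟨t, y, rfl⟩
  · simp_all
  · obtain rfl : x = y := by
      simpa using List.append_inj_right' (heq.trans (by simp : _ = (s ++ i :: t) ++ [y])) rfl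
    exact (ht x (by simp)).le

theorem RightWitness.le_of_cons (h : RightWitness i (x :: v)) : x ≤ i := by
  obtain ⟨_ | ⟨y, t⟩, s, heq, ht⟩ := h <;> simp_all [le_of_lt]

theorem Redundant.of_delete_left (hi : Redundant u i (v ++ j :: w))
    (hj : Redundant (u ++ i :: v) j w) : (v = [] ∧ i = j) ∨ Redundant (u ++ v) j w := by
  rcases hj with hj | hj
  · rcases hj.of_append_cons with hj | ⟨rfl, hv⟩
    · exact .inr (.inl hj)
    rcases hi with hi | hi
    · exact .inr (.inl (hi.append hv))
    cases v with
    | nil => exact .inl ⟨rfl, rfl⟩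
    | cons x v => exact absurd (hv x (by simp)) (not_lt.2 hi.le_of_cons)
  · exact .inr (.inr hj)

theorem Redundant.of_delete_right (hi : Redundant u i (v ++ j :: w))
    (hj : Redundant (u ++ i :: v) j w) : (v = [] ∧ i = j) ∨ Redundant u i (v ++ w) := by
  rcases hi with hi | hi
  · exact .inr (.inl hi)
  rcases hi.of_append_cons with hi | ⟨rfl, hv⟩
  · exact .inr (.inr hi)
  rcases hj with hj | hj
  · rcases v.eq_nil_or_concat with rfl | ⟨v, x, rfl⟩
    · exact .inl ⟨rfl, rfl⟩
    rw [show u ++ j :: v.concat x = (u ++ j :: v) ++ [x] by simp] at hj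
    exact absurd (hv x (by simp)) (not_lt.2 hj.le_of_append_singleton)
  · exact .inr (.inr (hj.append_left hv))

theorem deletion_diamond_of_append_cons (hi : Redundant u i (v ++ j :: w))
    (hj : Redundant (u ++ i :: v) j w) :
    ∃ d, ReflGen Deletion (u ++ v ++ j :: w) d ∧ ReflGen Deletion (u ++ i :: v ++ w) d := by
  by_cases hdeg : v = [] ∧ i = j
  · obtain ⟨rfl, rfl⟩ := hdeg
    exact ⟨_, .refl, by simpa using .refl⟩
  exact ⟨u ++ v ++ w,
    .single ⟨u ++ v, j, w, by simp, rfl, (hi.of_delete_left hj).resolve_left hdeg⟩,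
    .single ⟨u, i, v ++ w, by simp, by simp, (hi.of_delete_right hj).resolve_left hdeg⟩⟩

theorem deletion_diamond (hv : Deletion u v) (hw : Deletion u w) :
    ∃ d, ReflGen Deletion v d ∧ ReflGen Deletion w d := by
  obtain ⟨s, i, t, rfl, rfl, hi⟩ := hv
  obtain ⟨s', j, t', heq, rfl, hj⟩ := hw
  rcases List.append_cons_eq_append_cons_trichotomy heq with
    ⟨r, rfl, rfl⟩ | ⟨rfl, rfl, rfl⟩ | ⟨r, rfl, rfl⟩
  · simpa using deletion_diamond_of_append_cons hi hj
  · exact ⟨_, .refl, .refl⟩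
  · obtain ⟨d, hj, hi⟩ := deletion_diamond_of_append_cons hj hi
    exact ⟨d, by simpa using hi, by simpa using hj⟩

theorem equivalence_join_deletion : Equivalence (Join (ReflTransGen (Deletion (α := α)))) :=
  equivalence_join_reflTransGen fun _ _ _ hv hw ↦
    let ⟨d, hvd, hwd⟩ := deletion_diamond hv hw
    ⟨d, hvd, hwd.to_reflTransGen⟩

theorem Deletion.sublist (h : Deletion u v) : v.Sublist u := by
  obtain ⟨s, i, t, rfl, rfl, -⟩ := h
  exact (List.sublist_cons_self i t).append_left s

theorem sublist_of_reflTransGen_deletion (h : ReflTransGen Deletion u v) : v.Sublist u := by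
  induction h with
  | refl => exact .refl _
  | tail _ h ih => exact h.sublist.trans ih

end Deletion

section Kiselman

variable {u v : List (Fin n)}

theorem KisStep.deletion (h : KisStep u v) : Deletion u v := by
  cases h with
  | idem s t i => exact ⟨s ++ [i], i, t, by simp, by simp, .inl ⟨s, [], by simp, by simp⟩⟩
  | left s t i j hij =>
    exact ⟨s ++ [i, j], i, t, by simp, by simp, .inl ⟨s, [j], by simp, by simpa⟩⟩
  | right s t i j hij =>
    exact ⟨s, j, i :: j :: t, by simp, by simp, .inr ⟨[i], t, by simp, by simpa⟩⟩

theorem KisEquiv.join_deletion (h : KisEquiv u v) : Join (ReflTransGen Deletion) u v :=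
  equivalence_join_deletion.eqvGen_iff.1 <|
    EqvGen.mono (fun _ _ h ↦ ⟨_, .single h.deletion, .refl⟩) _ _ h

theorem Canonical.not_deletion (hu : Canonical u) : ¬ Deletion u v := by
  rintro ⟨s, i, t, rfl, -, ⟨s', t', rfl, ht'⟩ | ⟨t', s', rfl, ht'⟩⟩
  · obtain ⟨-, x, hx, hxi⟩ := hu i t' ⟨s', t, by simp⟩
    exact (ht' x hx).not_gt hxi
  · obtain ⟨⟨x, hx, hix⟩, -⟩ := hu i t' ⟨s, s', by simp⟩
    exact (ht' x hx).not_gt hix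

theorem Canonical.eq_of_reflTransGen_deletion (hu : Canonical u) (h : ReflTransGen Deletion u v) :
    u = v :=
  h.cases_head.resolve_right fun ⟨_, hd, _⟩ ↦ hu.not_deletion hd

theorem Canonical.sublist_of_kisEquiv (hu : Canonical u) (h : KisEquiv u v) : u.Sublist v := by
  obtain ⟨e, hue, hve⟩ := h.join_deletion
  rw [hu.eq_of_reflTransGen_deletion hue]
  exact sublist_of_reflTransGen_deletion hve

theorem KisStep.reflGen_filterGE (k : Fin n) (h : KisStep u v) :
    ReflGen KisStep (filterGE k u) (filterGE k v) := by
  cases h with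
  | idem s t i =>
    by_cases hi : k ≤ i
    · have := KisStep.idem (filterGE k s) (filterGE k t) i
      simpa [filterGE, hi] using ReflGen.single this
    · simpa [filterGE, hi] using .refl
  | left s t i j hij =>
    by_cases hi : k ≤ i
    · have := KisStep.left (filterGE k s) (filterGE k t) i j hij
      simpa [filterGE, hi, hi.trans hij.le] using ReflGen.single this
    · by_cases hj : k ≤ j <;> simpa [filterGE, hi, hj] using .refl
  | right s t i j hij =>
    by_cases hi : k ≤ i
    · have := KisStep.right (filterGE k s) (filterGE k t) i j hij
      simpa [filterGE, hi, hi.trans hij.le] using ReflGen.single this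
    by_cases hj : k ≤ j
    · have := KisStep.idem (filterGE k s) (filterGE k t) j
      simpa [filterGE, hi, hj] using ReflGen.single this
    · simpa [filterGE, hi, hj] using .refl

theorem KisEquiv.filterGE_congr (k : Fin n) (h : KisEquiv u v) :
    KisEquiv (filterGE k u) (filterGE k v) := by
  induction h with
  | rel _ _ h => exact EqvGen.reflGen_le_eqvGen _ _ _ (h.reflGen_filterGE k)
  | refl => exact EqvGen.refl _
  | symm _ _ _ ih => exact EqvGen.symm _ _ ih
  | trans _ _ _ _ _ ih ih' => exact EqvGen.trans _ _ _ ih ih'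

end Kiselman

theorem stmt_14_general {n : ℕ} (w c d : List (Fin n)) (k : Fin n)
    (hcw : KisEquiv c w)
    (hd : Canonical d) (hdw : KisEquiv d (filterGE k w)) :
    d.Sublist c := by
  have hdc : KisEquiv d (filterGE k c) :=
    EqvGen.trans _ _ _ hdw (EqvGen.symm _ _ (hcw.filterGE_congr k))
  exact (hd.sublist_of_kisEquiv hdc).trans List.filter_sublist

/-- `Can_{{k,…,n}} w` is a quasi-subword (sublist) of `Can w`. -/
theorem stmt_14 {n : ℕ} (w c d : List (Fin n)) (k : Fin n)
    (hc : Canonical c) (hcw : KisEquiv c w)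
    (hd : Canonical d) (hdw : KisEquiv d (filterGE k w)) :
    d.Sublist c :=
  stmt_14_general w c d k hcw hd hdw
end
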